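/- The centred X-class X° = ⊞-closure of the four single-point centred permutations has generating function 1/(1 − 4z + 2z²), and hence growth rate 2 + √2. -/

import Mathlib

/-- A *centred permutation*: `vals` is the one-line notation of the filled-in
permutation (length `n+1`), `origin` the index of the origin point. -/
structure CPerm where
  vals : List ℕ
  origin : ℕ
deriving DecidableEq

namespace CPerm

/-- Length of a centred permutation (origin does not count). -/
def len (p : CPerm) : ℕ := p.vals.length - 1

/-- A genuine centred permutation: one-line notation is a permutation of
`{0, …, N-1}` and the origin index is in range. -/
def IsValid (p : CPerm) : Prop :=
  p.vals ≠ [] ∧ p.origin < p.vals.length ∧ p.vals.Perm (List.range p.vals.length)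

def valAt (p : CPerm) (i : ℕ) : ℕ := p.vals.getD i 0

def originVal (p : CPerm) : ℕ := p.valAt p.origin

/-- The box-sum `p ⊞ q`: inflate the origin of `q` by a copy of `p`. -/
def boxSum (p q : CPerm) : CPerm :=
  let N := p.vals.length
  let v := q.originVal
  let shift : ℕ → ℕ := fun u => if u < v then u else u + (N - 1)
  ⟨(q.vals.take q.origin).map shift ++ p.vals.map (· + v) ++
      (q.vals.drop (q.origin + 1)).map shift,
    q.origin + p.origin⟩

/-- The trivial centred permutation (origin only, length 0). -/
def trivial : CPerm := ⟨[0], 0⟩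

/-- Iterated box-sum `σ₁ ⊞ σ₂ ⊞ ⋯ ⊞ σₙ`. -/
def boxSumList (l : List CPerm) : CPerm := l.foldr boxSum trivial

/-- `p` is ⊞-indecomposable: nonempty and not a box-sum of two strictly smaller
centred permutations. -/
def BoxIndecomposable (p : CPerm) : Prop :=
  1 ≤ p.len ∧
    ¬∃ a b : CPerm, a.IsValid ∧ b.IsValid ∧ 1 ≤ a.len ∧ 1 ≤ b.len ∧ boxSum a b = p

/-- The non-origin point at index `i` of `p` lies in quadrant `q` (1–4,
numbered anticlockwise). -/
def InQuadrant (p : CPerm) (q : ℕ) (i : ℕ) : Prop :=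
  i < p.vals.length ∧ i ≠ p.origin ∧
    ((q = 1 ∧ p.origin < i ∧ p.originVal < p.valAt i) ∨
     (q = 2 ∧ i < p.origin ∧ p.originVal < p.valAt i) ∨
     (q = 3 ∧ i < p.origin ∧ p.valAt i < p.originVal) ∨
     (q = 4 ∧ p.origin < i ∧ p.valAt i < p.originVal))

/-- All non-origin points of `p` lie in quadrant `q`. -/
def OneQuadrant (p : CPerm) (q : ℕ) : Prop :=
  ∀ i, i < p.vals.length → i ≠ p.origin → InQuadrant p q i

def OppositeQuadrants (q₁ q₂ : ℕ) : Prop :=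
  (q₁ = 1 ∧ q₂ = 3) ∨ (q₁ = 3 ∧ q₂ = 1) ∨ (q₁ = 2 ∧ q₂ = 4) ∨ (q₁ = 4 ∧ q₂ = 2)

/-- Centred pattern containment `p ≤ q` (origins must match up). -/
def PatternLE (p q : CPerm) : Prop :=
  ∃ f : ℕ → ℕ,
    (∀ i j, i < p.vals.length → j < p.vals.length → i < j → f i < f j) ∧
    (∀ i, i < p.vals.length → f i < q.vals.length) ∧
    f p.origin = q.origin ∧
    (∀ i j, i < p.vals.length → j < p.vals.length →
      (p.valAt i < p.valAt j ↔ q.valAt (f i) < q.valAt (f j)))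

/-- A centred permutation class: nonempty, consisting of valid centred
permutations, and downward closed under centred containment. -/
def IsClass (S : Set CPerm) : Prop :=
  S.Nonempty ∧ (∀ p ∈ S, p.IsValid) ∧
    ∀ p q : CPerm, q ∈ S → p.IsValid → PatternLE p q → p ∈ S

/-- `S` is closed under the box-sum. -/
def BoxClosed (S : Set CPerm) : Prop := ∀ p ∈ S, ∀ q ∈ S, boxSum p q ∈ S

/-- Number of centred permutations of length `n` in `S`. -/
noncomputable def count (S : Set CPerm) (n : ℕ) : ℕ := {p | p ∈ S ∧ p.len = n}.ncard

/-- The single-point centred permutation in quadrant `q`. -/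
def mu : ℕ → CPerm
  | 1 => ⟨[0, 1], 0⟩
  | 2 => ⟨[1, 0], 1⟩
  | 3 => ⟨[0, 1], 1⟩
  | 4 => ⟨[1, 0], 0⟩
  | _ => ⟨[0], 0⟩

def AdjacentQuadrants (a b : ℕ) : Prop :=
  (a, b) = (1, 2) ∨ (a, b) = (2, 3) ∨ (a, b) = (3, 4) ∨ (a, b) = (4, 1) ∨
  (a, b) = (2, 1) ∨ (a, b) = (3, 2) ∨ (a, b) = (4, 3) ∨ (a, b) = (1, 4)

/-- The adjacency condition on a centred class. -/
def AdjacencyCondition (S : Set CPerm) : Prop :=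
  (∃! q : ℕ, q ∈ ({1, 2, 3, 4} : Set ℕ) ∧ mu q ∈ S) ∨
    ∃ a b : ℕ, AdjacentQuadrants a b ∧ mu a ∈ S ∧ mu b ∈ S

end CPerm

open Filter PowerSeries

/-- The centred X-class `X°`: the ⊞-closure of the four single-point centred
permutations (as a centred class). -/
def XClass : Set CPerm :=
  {x | x.IsValid ∧ ∃ l : List CPerm,
    (∀ y ∈ l, ∃ q : ℕ, q ∈ ({1, 2, 3, 4} : Set ℕ) ∧ y = CPerm.mu q) ∧
    CPerm.PatternLE x (CPerm.boxSumList l)}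

namespace XAux
open CPerm

/-- Add one outermost point in quadrant `q`. -/
def step (r : CPerm) (q : ℕ) : CPerm :=
  match q with
  | 1 => ⟨r.vals ++ [r.vals.length], r.origin⟩
  | 2 => ⟨r.vals.length :: r.vals, r.origin + 1⟩
  | 3 => ⟨0 :: r.vals.map (· + 1), r.origin + 1⟩
  | 4 => ⟨r.vals.map (· + 1) ++ [0], r.origin⟩
  | _ => r

def enc (w : List ℕ) : CPerm := w.foldl step trivial

lemma trivial_valid : trivial.IsValid := by
  refine ⟨by simp [CPerm.trivial], by simp [CPerm.trivial], ?_⟩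
  simp [CPerm.trivial, List.range_succ]

lemma valid_vals_lt {r : CPerm} (h : r.IsValid) : ∀ x ∈ r.vals, x < r.vals.length := by
  intro x hx
  have := h.2.2.subset hx
  simpa using this

lemma step_valid {r : CPerm} (h : r.IsValid) (q : ℕ) : (step r q).IsValid := by
  obtain ⟨h1, h2, h3⟩ := h
  match q with
  | 0 => exact ⟨h1, h2, h3⟩
  | (n+5) => exact ⟨h1, h2, h3⟩
  | 1 =>
    refine ⟨by simp [step], by simp [step]; omega, ?_⟩
    simp only [step, List.length_append, List.length_cons, List.length_nil]
    rw [List.range_succ]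
    exact h3.append_right _
  | 2 =>
    refine ⟨by simp [step], by simp [step]; omega, ?_⟩
    simp only [step, List.length_cons]
    rw [List.range_succ]
    exact ((h3.cons _).trans (List.perm_append_singleton _ _).symm)
  | 3 =>
    refine ⟨by simp [step], by simp [step]; omega, ?_⟩
    simp only [step, List.length_cons, List.length_map]
    rw [List.range_succ_eq_map]
    refine List.Perm.cons _ ?_
    have := h3.map (· + 1)
    simpa [Nat.succ_eq_add_one] using this
  | 4 =>
    refine ⟨by simp [step], by simp [step]; omega, ?_⟩
    simp only [step, List.length_append, List.length_map, List.length_cons, List.length_nil]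
    rw [List.range_succ_eq_map]
    refine (List.perm_append_singleton _ _).trans ?_
    refine List.Perm.cons _ ?_
    have := h3.map (· + 1)
    simpa [Nat.succ_eq_add_one] using this

lemma step_len (r : CPerm) (q : ℕ) (hq : q = 1 ∨ q = 2 ∨ q = 3 ∨ q = 4) :
    (step r q).vals.length = r.vals.length + 1 := by
  rcases hq with rfl|rfl|rfl|rfl <;> simp [step]

lemma enc_valid (w : List ℕ) : (enc w).IsValid := by
  suffices H : ∀ (w : List ℕ) (r : CPerm), r.IsValid → (w.foldl step r).IsValid by
    exact H w CPerm.trivial trivial_valid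
  intro w
  induction w with
  | nil => intro r hr; exact hr
  | cons q w ih => intro r hr; exact ih _ (step_valid hr q)

lemma enc_length (w : List ℕ) (hw : ∀ q ∈ w, q = 1 ∨ q = 2 ∨ q = 3 ∨ q = 4) :
    (enc w).vals.length = w.length + 1 := by
  suffices H : ∀ (w : List ℕ) (r : CPerm), (∀ q ∈ w, q = 1 ∨ q = 2 ∨ q = 3 ∨ q = 4) →
      (w.foldl step r).vals.length = r.vals.length + w.length by
    rw [enc, H w CPerm.trivial hw]; simp [CPerm.trivial]; omega
  intro w
  induction w with
  | nil => intro r _; simp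
  | cons q w ih =>
    intro r hr
    have h1 := ih (step r q) (fun x hx => hr x (List.mem_cons_of_mem _ hx))
    rw [List.foldl_cons, h1, step_len r q (hr q (List.mem_cons_self))]
    simp; omega

lemma valid_originVal_lt {r : CPerm} (h : r.IsValid) : r.originVal < r.vals.length := by
  have ho := h.2.1
  have hmem : r.vals.getD r.origin 0 ∈ r.vals := by
    rw [List.getD_eq_getElem r.vals 0 ho]
    exact List.getElem_mem ho
  exact valid_vals_lt h _ hmem



lemma cperm_ext {p q : CPerm} (h1 : p.vals = q.vals) (h2 : p.origin = q.origin) : p = q := by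
  cases p; cases q; cases h1; cases h2; rfl

lemma boxSum_vals (a r : CPerm) : (boxSum a r).vals =
    (r.vals.take r.origin).map (fun u => if u < r.originVal then u else u + (a.vals.length - 1)) ++
      a.vals.map (· + r.originVal) ++
      (r.vals.drop (r.origin + 1)).map
        (fun u => if u < r.originVal then u else u + (a.vals.length - 1)) := rfl

lemma boxSum_origin (a r : CPerm) : (boxSum a r).origin = r.origin + a.origin := rfl

lemma boxSum_step (a r : CPerm) (hr : r.IsValid) (ha : a.vals ≠ []) (q : ℕ) :
    boxSum a (step r q) = step (boxSum a r) q := by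
  have hM : 1 ≤ a.vals.length := List.length_pos_iff.2 ha
  have ho : r.origin < r.vals.length := hr.2.1
  have hvN : r.originVal < r.vals.length := valid_originVal_lt hr
  have hBSlen : (boxSum a r).vals.length = r.vals.length + a.vals.length - 1 := by
    rw [boxSum_vals]
    simp only [List.length_append, List.length_map, List.length_take, List.length_drop]
    omega
  have hsh : ∀ l : List ℕ,
      (l.map (· + 1)).map (fun u => if u < r.originVal + 1 then u else u + (a.vals.length - 1)) =
      (l.map (fun u => if u < r.originVal then u else u + (a.vals.length - 1))).map (· + 1) := by
    intro l
    rw [List.map_map, List.map_map]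
    apply List.map_congr_left
    intro u _
    by_cases h : u < r.originVal
    · simp only [Function.comp_apply, if_pos h, if_pos (by omega : u + 1 < r.originVal + 1)]
    · simp only [Function.comp_apply, if_neg h, if_neg (show ¬ (u + 1 < r.originVal + 1) by omega)]
      omega
  have hmid : a.vals.map (· + (r.originVal + 1)) = (a.vals.map (· + r.originVal)).map (· + 1) := by
    rw [List.map_map]; apply List.map_congr_left; intro u _; simp only [Function.comp_apply]; omega
  match q with
  | 0 => rfl
  | (n+5) => rfl
  | 1 =>
    apply cperm_ext
    · show (boxSum a ⟨r.vals ++ [r.vals.length], r.origin⟩).vals =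
        (boxSum a r).vals ++ [(boxSum a r).vals.length]
      have hov : CPerm.originVal ⟨r.vals ++ [r.vals.length], r.origin⟩ = r.originVal := by
        show (r.vals ++ [r.vals.length]).getD r.origin 0 = r.originVal
        rw [List.getD_append _ _ _ _ ho]; rfl
      rw [hBSlen, boxSum_vals, boxSum_vals]
      dsimp only
      simp only [hov]
      rw [List.take_append_of_le_length (by omega), List.drop_append_of_le_length (by omega),
        List.map_append]
      simp only [List.map_cons, List.map_nil]
      rw [if_neg (by omega)]
      rw [show r.vals.length + (a.vals.length - 1) = r.vals.length + a.vals.length - 1 by omega]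
      simp [List.append_assoc]
    · rfl
  | 2 =>
    apply cperm_ext
    · show (boxSum a ⟨r.vals.length :: r.vals, r.origin + 1⟩).vals =
        (boxSum a r).vals.length :: (boxSum a r).vals
      have hov : CPerm.originVal ⟨r.vals.length :: r.vals, r.origin + 1⟩ = r.originVal := by
        show (r.vals.length :: r.vals).getD (r.origin + 1) 0 = r.originVal
        rw [List.getD_cons_succ]; rfl
      rw [hBSlen, boxSum_vals, boxSum_vals]
      dsimp only
      simp only [hov]
      rw [List.take_succ_cons, List.drop_succ_cons, List.map_cons]
      rw [if_neg (by omega)]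
      simp only [List.cons_append]
      congr 2
      omega
    · show r.origin + 1 + a.origin = (boxSum a r).origin + 1
      rw [boxSum_origin]; omega
  | 3 =>
    apply cperm_ext
    · show (boxSum a ⟨0 :: r.vals.map (· + 1), r.origin + 1⟩).vals =
        0 :: (boxSum a r).vals.map (· + 1)
      have hov : CPerm.originVal ⟨0 :: r.vals.map (· + 1), r.origin + 1⟩ = r.originVal + 1 := by
        show (0 :: r.vals.map (· + 1)).getD (r.origin + 1) 0 = r.originVal + 1
        rw [List.getD_cons_succ, List.getD_eq_getElem _ 0 (by simpa using ho), List.getElem_map,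
          ← List.getD_eq_getElem _ 0 ho]
        rfl
      rw [boxSum_vals, boxSum_vals]
      dsimp only
      simp only [hov]
      rw [List.take_succ_cons, List.drop_succ_cons, List.map_cons, ← List.map_take, ← List.map_drop,
        hsh, hsh, hmid]
      rw [if_pos (by omega)]
      simp [List.map_append]
    · show r.origin + 1 + a.origin = (boxSum a r).origin + 1
      rw [boxSum_origin]; omega
  | 4 =>
    apply cperm_ext
    · show (boxSum a ⟨r.vals.map (· + 1) ++ [0], r.origin⟩).vals =
        (boxSum a r).vals.map (· + 1) ++ [0]
      have hov : CPerm.originVal ⟨r.vals.map (· + 1) ++ [0], r.origin⟩ = r.originVal + 1 := by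
        show (r.vals.map (· + 1) ++ [0]).getD r.origin 0 = r.originVal + 1
        rw [List.getD_append _ _ _ _ (by simpa using ho),
          List.getD_eq_getElem _ 0 (by simpa using ho), List.getElem_map,
          ← List.getD_eq_getElem _ 0 ho]
        rfl
      rw [boxSum_vals, boxSum_vals]
      dsimp only
      simp only [hov]
      rw [List.take_append_of_le_length (by simpa using le_of_lt ho),
        List.drop_append_of_le_length (by simpa using ho),
        List.map_append, ← List.map_take, ← List.map_drop, hsh, hsh, hmid]
      simp only [List.map_cons, List.map_nil]
      rw [if_pos (by omega)]
      simp [List.map_append, List.append_assoc]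
    · show r.origin + a.origin = (boxSum a r).origin
      rw [boxSum_origin]

lemma boxSum_trivial_right (a : CPerm) : boxSum a CPerm.trivial = a := by
  apply cperm_ext
  · rw [boxSum_vals]
    simp [CPerm.trivial, CPerm.originVal, CPerm.valAt]
  · rw [boxSum_origin]
    simp [CPerm.trivial]

lemma boxSum_foldl (a : CPerm) (ha : a.vals ≠ []) :
    ∀ (w : List ℕ) (r : CPerm), r.IsValid → boxSum a (w.foldl step r) = (w.foldl step (boxSum a r)) := by
  intro w
  induction w with
  | nil => intro r _; rfl
  | cons q w ih =>
    intro r hr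
    rw [List.foldl_cons, List.foldl_cons, ih _ (step_valid hr q), boxSum_step a r hr ha q]

lemma mu_vals_ne_nil (c : ℕ) : (mu c).vals ≠ [] := by
  match c with
  | 0 => simp [mu]
  | 1 => simp [mu]
  | 2 => simp [mu]
  | 3 => simp [mu]
  | 4 => simp [mu]
  | (n+5) => simp [mu]

lemma step_trivial_eq_mu (c : ℕ) : step CPerm.trivial c = mu c := by
  match c with
  | 0 => rfl
  | 1 => rfl
  | 2 => rfl
  | 3 => rfl
  | 4 => rfl
  | (n+5) => rfl

lemma boxSumList_map_mu (w : List ℕ) : boxSumList (w.map mu) = enc w := by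
  induction w with
  | nil => rfl
  | cons c w ih =>
    show boxSum (mu c) (boxSumList (w.map mu)) = enc (c :: w)
    rw [ih]
    show boxSum (mu c) (List.foldl step CPerm.trivial w) = List.foldl step (step CPerm.trivial c) w
    rw [boxSum_foldl (mu c) (mu_vals_ne_nil c) w CPerm.trivial trivial_valid, boxSum_trivial_right,
      step_trivial_eq_mu]



/-! ### Words, canonical form, decode -/

def Lw (w : List ℕ) : Prop := ∀ q ∈ w, q = 1 ∨ q = 2 ∨ q = 3 ∨ q = 4

def RB (a b : ℕ) : Prop := ¬(a = 3 ∧ b = 1) ∧ ¬(a = 4 ∧ b = 2)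

instance : DecidablePred (fun p : ℕ × ℕ => RB p.1 p.2) := fun _ => by unfold RB; infer_instance

def Canon (w : List ℕ) : Prop := List.Chain' RB w

lemma enc_snoc (w : List ℕ) (c : ℕ) : enc (w ++ [c]) = step (enc w) c := by
  simp [enc, List.foldl_append]

lemma enc_append (x y : List ℕ) : enc (x ++ y) = y.foldl step (enc x) := by
  simp [enc, List.foldl_append]

lemma swap31 (r : CPerm) : step (step r 3) 1 = step (step r 1) 3 := by
  apply cperm_ext <;> simp [step]

lemma swap42 (r : CPerm) : step (step r 4) 2 = step (step r 2) 4 := by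
  apply cperm_ext <;> simp [step]

lemma bubble (a b : ℕ) (hswap : ∀ r, step (step r a) b = step (step r b) a) :
    ∀ (k : ℕ) (s : List ℕ), enc (s ++ a :: List.replicate k b) = step (enc (s ++ List.replicate k b)) a := by
  intro k
  induction k with
  | zero => intro s; simp [enc_snoc]
  | succ k ih =>
    intro s
    have h1 : s ++ a :: List.replicate (k+1) b = (s ++ [a, b]) ++ List.replicate k b := by
      simp [List.replicate_succ]
    have h2 : enc (s ++ [a, b]) = enc (s ++ [b, a]) := by
      have e1 : s ++ [a, b] = (s ++ [a]) ++ [b] := by simp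
      have e2 : s ++ [b, a] = (s ++ [b]) ++ [a] := by simp
      rw [e1, e2, enc_snoc, enc_snoc, enc_snoc, enc_snoc, hswap]
    have h3 : (s ++ [b, a]) ++ List.replicate k b = (s ++ [b]) ++ a :: List.replicate k b := by simp
    rw [h1, enc_append, h2, ← enc_append, h3, ih (s ++ [b])]
    congr 1
    rw [show (s ++ [b]) ++ List.replicate k b = s ++ List.replicate (k+1) b by simp [List.replicate_succ]]

/-- peel selector: which outermost letter to strip, by priority 3 > 4 > 2 > 1. -/
def peelQ (p : CPerm) : ℕ :=
  if p.vals.getD 0 0 = 0 ∧ 1 ≤ p.origin then 3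
  else if p.vals.getD (p.vals.length - 1) 0 = 0 ∧ p.origin + 1 < p.vals.length then 4
  else if p.vals.getD 0 0 + 1 = p.vals.length ∧ 1 ≤ p.origin then 2
  else 1

def peel (p : CPerm) : CPerm :=
  match peelQ p with
  | 3 => ⟨p.vals.tail.map (· - 1), p.origin - 1⟩
  | 4 => ⟨p.vals.dropLast.map (· - 1), p.origin⟩
  | 2 => ⟨p.vals.tail, p.origin - 1⟩
  | _ => ⟨p.vals.dropLast, p.origin⟩

def decodeAux : ℕ → CPerm → List ℕ
  | 0, _ => []
  | (n+1), p => decodeAux n (peel p) ++ [peelQ p]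

/-! head and last values of the four step images -/

section stepvals
variable (u : List ℕ)

lemma enc_vals_ne_nil : (enc u).vals ≠ [] := (enc_valid u).1

lemma enc_vals_len_pos : 0 < (enc u).vals.length := List.length_pos_iff.2 (enc_vals_ne_nil u)

lemma enc_origin_lt : (enc u).origin < (enc u).vals.length := (enc_valid u).2.1

lemma enc_vals_lt : ∀ x ∈ (enc u).vals, x < (enc u).vals.length :=
  valid_vals_lt (enc_valid u)

lemma enc_getD_lt (i : ℕ) (hi : i < (enc u).vals.length) :
    (enc u).vals.getD i 0 < (enc u).vals.length := by
  apply enc_vals_lt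
  rw [List.getD_eq_getElem _ 0 hi]
  exact List.getElem_mem hi

-- step 1 : vals = V ++ [N], origin o
lemma step1_vals (r : CPerm) : (step r 1).vals = r.vals ++ [r.vals.length] := rfl
lemma step1_origin (r : CPerm) : (step r 1).origin = r.origin := rfl
lemma step2_vals (r : CPerm) : (step r 2).vals = r.vals.length :: r.vals := rfl
lemma step2_origin (r : CPerm) : (step r 2).origin = r.origin + 1 := rfl
lemma step3_vals (r : CPerm) : (step r 3).vals = 0 :: r.vals.map (· + 1) := rfl
lemma step3_origin (r : CPerm) : (step r 3).origin = r.origin + 1 := rfl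
lemma step4_vals (r : CPerm) : (step r 4).vals = r.vals.map (· + 1) ++ [0] := rfl
lemma step4_origin (r : CPerm) : (step r 4).origin = r.origin := rfl

lemma hd_step1 : (step (enc u) 1).vals.getD 0 0 = (enc u).vals.getD 0 0 := by
  rw [step1_vals, List.getD_append _ _ _ _ (enc_vals_len_pos u)]

lemma lst_step1 : (step (enc u) 1).vals.getD ((step (enc u) 1).vals.length - 1) 0
    = (enc u).vals.length := by
  rw [step1_vals]
  have h : (enc u).vals.length ≥ 1 := enc_vals_len_pos u
  rw [List.length_append, List.length_cons, List.length_nil]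
  rw [List.getD_append_right _ _ _ _ (by omega)]
  simp

lemma hd_step2 : (step (enc u) 2).vals.getD 0 0 = (enc u).vals.length := rfl

lemma lst_step2 : (step (enc u) 2).vals.getD ((step (enc u) 2).vals.length - 1) 0
    = (enc u).vals.getD ((enc u).vals.length - 1) 0 := by
  rw [step2_vals]
  have h : (enc u).vals.length ≥ 1 := enc_vals_len_pos u
  rw [List.length_cons]
  rw [show (enc u).vals.length + 1 - 1 = ((enc u).vals.length - 1) + 1 by omega, List.getD_cons_succ]

lemma hd_step3 : (step (enc u) 3).vals.getD 0 0 = 0 := rfl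

lemma lst_step3 : (step (enc u) 3).vals.getD ((step (enc u) 3).vals.length - 1) 0
    = (enc u).vals.getD ((enc u).vals.length - 1) 0 + 1 := by
  rw [step3_vals]
  have h : (enc u).vals.length ≥ 1 := enc_vals_len_pos u
  rw [List.length_cons, List.length_map]
  rw [show (enc u).vals.length + 1 - 1 = ((enc u).vals.length - 1) + 1 by omega, List.getD_cons_succ]
  rw [List.getD_eq_getElem _ 0 (by rw [List.length_map]; omega), List.getElem_map,
    ← List.getD_eq_getElem _ 0 (by omega)]

lemma hd_step4 : (step (enc u) 4).vals.getD 0 0 = (enc u).vals.getD 0 0 + 1 := by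
  rw [step4_vals]
  have h : 0 < ((enc u).vals.map (· + 1)).length := by
    rw [List.length_map]; exact enc_vals_len_pos u
  rw [List.getD_append _ _ _ _ h, List.getD_eq_getElem _ 0 h, List.getElem_map,
    ← List.getD_eq_getElem _ 0 (enc_vals_len_pos u)]

lemma lst_step4 : (step (enc u) 4).vals.getD ((step (enc u) 4).vals.length - 1) 0 = 0 := by
  rw [step4_vals]
  have h : (enc u).vals.length ≥ 1 := enc_vals_len_pos u
  rw [List.length_append, List.length_map, List.length_cons, List.length_nil]
  rw [List.getD_append_right _ _ _ _ (by rw [List.length_map]; omega)]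
  simp

end stepvals

lemma Lw_append_last {u : List ℕ} {c : ℕ} (h : Lw (u ++ [c])) :
    Lw u ∧ (c = 1 ∨ c = 2 ∨ c = 3 ∨ c = 4) :=
  ⟨fun q hq => h q (by simp [hq]), h c (by simp)⟩

/-- Corner lemma for 3: bottom-left corner forces `u = s ++ 3 :: 1^k`. -/
lemma C3 : ∀ u, Lw u → (enc u).vals.getD 0 0 = 0 → 1 ≤ (enc u).origin →
    ∃ s k, Lw s ∧ u = s ++ 3 :: List.replicate k 1 := by
  intro u
  induction u using List.reverseRecOn with
  | nil => intro _ _ h2; simp [enc, CPerm.trivial] at h2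
  | append_singleton u c ih =>
    intro hLw h1 h2
    obtain ⟨hLu, hc⟩ := Lw_append_last hLw
    rw [enc_snoc] at h1 h2
    rcases hc with rfl|rfl|rfl|rfl
    · rw [hd_step1] at h1
      rw [step1_origin] at h2
      obtain ⟨s, k, hs, rfl⟩ := ih hLu h1 h2
      exact ⟨s, k+1, hs, by simp [List.replicate_succ']⟩
    · rw [hd_step2] at h1
      have := enc_vals_len_pos u; omega
    · exact ⟨u, 0, hLu, by simp⟩
    · rw [hd_step4] at h1; omega

/-- Corner lemma for 4: bottom-right corner forces `u = s ++ 4 :: 2^k`. -/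
lemma C4 : ∀ u, Lw u → (enc u).vals.getD ((enc u).vals.length - 1) 0 = 0 →
    (enc u).origin + 1 < (enc u).vals.length →
    ∃ s k, Lw s ∧ u = s ++ 4 :: List.replicate k 2 := by
  intro u
  induction u using List.reverseRecOn with
  | nil => intro _ _ h2; simp [enc, CPerm.trivial] at h2
  | append_singleton u c ih =>
    intro hLw h1 h2
    obtain ⟨hLu, hc⟩ := Lw_append_last hLw
    rw [enc_snoc] at h1 h2
    rcases hc with rfl|rfl|rfl|rfl
    · rw [lst_step1] at h1
      have := enc_vals_len_pos u; omega
    · rw [lst_step2] at h1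
      rw [step2_origin, step2_vals, List.length_cons] at h2
      obtain ⟨s, k, hs, rfl⟩ := ih hLu h1 (by omega)
      exact ⟨s, k+1, hs, by simp [List.replicate_succ']⟩
    · rw [lst_step3] at h1; omega
    · exact ⟨u, 0, hLu, by simp⟩

/-- Corner lemma for 2: top-left corner forces `u = s ++ 2 :: 4^k`. -/
lemma C2 : ∀ u, Lw u → (enc u).vals.getD 0 0 + 1 = (enc u).vals.length → 1 ≤ (enc u).origin →
    ∃ s k, Lw s ∧ u = s ++ 2 :: List.replicate k 4 := by
  intro u
  induction u using List.reverseRecOn with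
  | nil => intro _ _ h2; simp [enc, CPerm.trivial] at h2
  | append_singleton u c ih =>
    intro hLw h1 h2
    obtain ⟨hLu, hc⟩ := Lw_append_last hLw
    rw [enc_snoc] at h1 h2
    rcases hc with rfl|rfl|rfl|rfl
    · rw [hd_step1, step1_vals, List.length_append, List.length_cons, List.length_nil] at h1
      have := enc_getD_lt u 0 (enc_vals_len_pos u)
      omega
    · exact ⟨u, 0, hLu, by simp⟩
    · rw [hd_step3, step3_vals, List.length_cons, List.length_map] at h1
      have := enc_vals_len_pos u; omega
    · rw [hd_step4, step4_vals, List.length_append, List.length_map, List.length_cons,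
        List.length_nil] at h1
      rw [step4_origin] at h2
      obtain ⟨s, k, hs, rfl⟩ := ih hLu (by omega) h2
      exact ⟨s, k+1, hs, by simp [List.replicate_succ']⟩



lemma RB_any3 (a : ℕ) : RB a 3 := ⟨fun h => by omega, fun h => by omega⟩
lemma RB_any4 (a : ℕ) : RB a 4 := ⟨fun h => by omega, fun h => by omega⟩
lemma RB_ne3_1 {a : ℕ} (h : a ≠ 3) : RB a 1 := ⟨fun hh => h hh.1, fun hh => by omega⟩
lemma RB_ne4_2 {a : ℕ} (h : a ≠ 4) : RB a 2 := ⟨fun hh => by omega, fun hh => h hh.1⟩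

lemma Lw_append {s t : List ℕ} (hs : Lw s) (ht : Lw t) : Lw (s ++ t) := by
  intro q hq
  rcases List.mem_append.1 hq with h|h
  · exact hs q h
  · exact ht q h

lemma Lw_replicate {k c : ℕ} (hc : c = 1 ∨ c = 2 ∨ c = 3 ∨ c = 4) : Lw (List.replicate k c) := by
  intro q hq
  rw [List.eq_of_mem_replicate hq]
  exact hc

lemma Canon_append_single {w : List ℕ} {c : ℕ} (hw : Canon w)
    (h : ∀ x ∈ w.getLast?, RB x c) : Canon (w ++ [c]) := by
  unfold Canon List.Chain'
  rw [List.isChain_append]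
  exact ⟨hw, List.isChain_singleton c, fun x hx y hy => by
    simp only [List.head?_cons, Option.mem_def, Option.some.injEq] at hy
    subst hy; exact h x hx⟩

lemma not_canon_mid (s : List ℕ) (a b : ℕ) (k : ℕ) (hab : ¬ RB a b) :
    ¬ Canon (s ++ a :: List.replicate (k+1) b) := by
  intro h
  unfold Canon List.Chain' at h
  rw [List.isChain_append] at h
  have h2 := h.2.1
  rw [List.replicate_succ, List.isChain_cons_cons] at h2
  exact hab h2.1

/-- Normalization: every word has a canonical word with the same encoding. -/
lemma norm : ∀ (n : ℕ) (u : List ℕ), u.length ≤ n → Lw u →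
    ∃ w, Lw w ∧ Canon w ∧ w.length = u.length ∧ enc w = enc u := by
  intro n
  induction n with
  | zero =>
    intro u hu _
    have : u = [] := List.eq_nil_of_length_eq_zero (by omega)
    exact ⟨[], by intro q hq; simp at hq, List.isChain_nil, by simp [this], by rw [this]⟩
  | succ n ih =>
    intro u hulen hLw
    rcases List.eq_nil_or_concat u with rfl | ⟨t, c, rfl⟩
    · exact ⟨[], by intro q hq; simp at hq, List.isChain_nil, rfl, rfl⟩
    rw [List.concat_eq_append] at *
    obtain ⟨hLt, hc⟩ := Lw_append_last hLw
    set p := enc (t ++ [c]) with hp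
    by_cases b3 : p.vals.getD 0 0 = 0 ∧ 1 ≤ p.origin
    · -- strip a 3
      obtain ⟨s, k, hs, hu⟩ := C3 (t ++ [c]) hLw b3.1 b3.2
      have hLu' : Lw (s ++ List.replicate k 1) := Lw_append hs (Lw_replicate (by tauto))
      have hlen' : (s ++ List.replicate k 1).length ≤ n := by
        have := congrArg List.length hu
        simp at this ⊢
        simp at hulen
        omega
      obtain ⟨w', hLw', hCw', hwl', hwe'⟩ := ih _ hlen' hLu'
      refine ⟨w' ++ [3], Lw_append hLw' (by intro q hq; simp at hq; tauto),
        Canon_append_single hCw' (fun x _ => RB_any3 x), ?_, ?_⟩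
      · have := congrArg List.length hu
        simp at this hwl' ⊢
        omega
      · rw [enc_snoc, hwe', ← bubble 3 1 swap31 k s, ← hu]
    · by_cases b4 : p.vals.getD (p.vals.length - 1) 0 = 0 ∧ p.origin + 1 < p.vals.length
      · -- strip a 4
        obtain ⟨s, k, hs, hu⟩ := C4 (t ++ [c]) hLw b4.1 b4.2
        have hLu' : Lw (s ++ List.replicate k 2) := Lw_append hs (Lw_replicate (by tauto))
        have hlen' : (s ++ List.replicate k 2).length ≤ n := by
          have := congrArg List.length hu
          simp at this ⊢; simp at hulen; omega
        obtain ⟨w', hLw', hCw', hwl', hwe'⟩ := ih _ hlen' hLu'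
        refine ⟨w' ++ [4], Lw_append hLw' (by intro q hq; simp at hq; tauto),
          Canon_append_single hCw' (fun x _ => RB_any4 x), ?_, ?_⟩
        · have := congrArg List.length hu
          simp at this hwl' ⊢; omega
        · rw [enc_snoc, hwe', ← bubble 4 2 swap42 k s, ← hu]
      · by_cases b2 : p.vals.getD 0 0 + 1 = p.vals.length ∧ 1 ≤ p.origin
        · -- strip a 2
          obtain ⟨s, k, hs, hu⟩ := C2 (t ++ [c]) hLw b2.1 b2.2
          have hLu' : Lw (s ++ List.replicate k 4) := Lw_append hs (Lw_replicate (by tauto))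
          have hlen' : (s ++ List.replicate k 4).length ≤ n := by
            have := congrArg List.length hu
            simp at this ⊢; simp at hulen; omega
          obtain ⟨w', hLw', hCw', hwl', hwe'⟩ := ih _ hlen' hLu'
          have hencu : enc (t ++ [c]) = step (enc (s ++ List.replicate k 4)) 2 := by
            rw [hu]; exact bubble 2 4 (fun r => (swap42 r).symm) k s
          refine ⟨w' ++ [2], Lw_append hLw' (by intro q hq; simp at hq; tauto), ?_, ?_, ?_⟩
          · -- canonicity: last of w' is not 4
            apply Canon_append_single hCw'
            intro x hx
            apply RB_ne4_2
            rintro rfl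
            -- w' ends with 4
            have hx' : w' ≠ [] := by rintro rfl; simp at hx
            obtain ⟨z, d, rfl⟩ := List.eq_nil_or_concat w' |>.resolve_left hx'
            rw [List.concat_eq_append] at *
            have hd4 : d = 4 := by
              have := List.getLast?_concat (l := z) (a := d)
              rw [this] at hx
              simpa using hx
            subst hd4
            -- now enc u' = step (enc z) 4, so b4 should have triggered
            have he : enc (s ++ List.replicate k 4) = step (enc z) 4 := by
              rw [← hwe', enc_snoc]
            apply b4
            constructor
            · rw [hp, hencu, lst_step2, he, lst_step4]
            · rw [hp, hencu, step2_origin, step2_vals, List.length_cons, he, step4_origin,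
                step4_vals, List.length_append, List.length_map]
              have := enc_origin_lt z
              simp only [List.length_cons, List.length_nil]
              omega
          · have := congrArg List.length hu
            simp at this hwl' ⊢; omega
          · rw [enc_snoc, hwe', ← hencu]
        · -- the last letter must be a 1
          have hc1 : c = 1 := by
            rcases hc with rfl|rfl|rfl|rfl
            · rfl
            · exfalso; apply b2
              rw [hp, enc_snoc]
              refine ⟨by rw [hd_step2, step2_vals, List.length_cons], ?_⟩
              rw [step2_origin]; omega
            · exfalso; apply b3
              rw [hp, enc_snoc]
              exact ⟨hd_step3 t, by rw [step3_origin]; omega⟩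
            · exfalso; apply b4
              rw [hp, enc_snoc]
              refine ⟨lst_step4 t, ?_⟩
              rw [step4_origin, step4_vals, List.length_append, List.length_map]
              have := enc_origin_lt t
              simp only [List.length_cons, List.length_nil]
              omega
          subst hc1
          have hlen' : t.length ≤ n := by simp at hulen; omega
          obtain ⟨w', hLw', hCw', hwl', hwe'⟩ := ih _ hlen' hLt
          refine ⟨w' ++ [1], Lw_append hLw' (by intro q hq; simp at hq; tauto), ?_, by simp [hwl'], ?_⟩
          · apply Canon_append_single hCw'
            intro x hx
            apply RB_ne3_1
            rintro rfl
            have hx' : w' ≠ [] := by rintro rfl; simp at hx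
            obtain ⟨z, d, rfl⟩ := List.eq_nil_or_concat w' |>.resolve_left hx'
            rw [List.concat_eq_append] at *
            have hd3 : d = 3 := by
              have := List.getLast?_concat (l := z) (a := d)
              rw [this] at hx
              simpa using hx
            subst hd3
            have he : enc t = step (enc z) 3 := by rw [← hwe', enc_snoc]
            apply b3
            constructor
            · rw [hp, enc_snoc, hd_step1, he, hd_step3]
            · rw [hp, enc_snoc, step1_origin, he, step3_origin]; omega
          · rw [enc_snoc, hwe', hp, enc_snoc]



lemma Canon_prefix {u : List ℕ} {c : ℕ} (h : Canon (u ++ [c])) : Canon u :=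
  (List.isChain_append.1 h).1

lemma not_RB_31 : ¬ RB 3 1 := fun h => h.1 ⟨rfl, rfl⟩
lemma not_RB_42 : ¬ RB 4 2 := fun h => h.2 ⟨rfl, rfl⟩

lemma peelQ_step3 (u : List ℕ) : peelQ (step (enc u) 3) = 3 := by
  unfold peelQ
  rw [if_pos ⟨hd_step3 u, by rw [step3_origin]; omega⟩]

lemma peelQ_step4 (u : List ℕ) : peelQ (step (enc u) 4) = 4 := by
  unfold peelQ
  rw [if_neg (by rw [hd_step4]; omega)]
  rw [if_pos ⟨lst_step4 u, by
    rw [step4_origin, step4_vals, List.length_append, List.length_map]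
    have := enc_origin_lt u
    simp only [List.length_cons, List.length_nil]
    omega⟩]

lemma peelQ_step2 (u : List ℕ) (hLu : Lw u) (hC : Canon (u ++ [2])) :
    peelQ (step (enc u) 2) = 2 := by
  unfold peelQ
  rw [if_neg (by
    rw [hd_step2]
    have := enc_vals_len_pos u
    omega)]
  rw [if_neg ?_, if_pos ⟨by rw [hd_step2, step2_vals, List.length_cons], by rw [step2_origin]; omega⟩]
  rintro ⟨h1, h2⟩
  rw [lst_step2] at h1
  rw [step2_origin, step2_vals, List.length_cons] at h2
  obtain ⟨s, k, _, hu⟩ := C4 u hLu h1 (by have := enc_origin_lt u; omega)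
  apply not_canon_mid s 4 2 k not_RB_42
  rw [hu] at hC
  rw [show (s ++ 4 :: List.replicate k 2) ++ [2] = s ++ 4 :: List.replicate (k+1) 2 by
    simp [List.replicate_succ']] at hC
  exact hC

lemma peelQ_step1 (u : List ℕ) (hLu : Lw u) (hC : Canon (u ++ [1])) :
    peelQ (step (enc u) 1) = 1 := by
  unfold peelQ
  rw [if_neg ?_, if_neg (by
      rw [lst_step1]
      have := enc_vals_len_pos u
      omega),
    if_neg (by
      rw [hd_step1, step1_vals, List.length_append]
      have := enc_getD_lt u 0 (enc_vals_len_pos u)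
      simp only [List.length_cons, List.length_nil]
      omega)]
  rintro ⟨h1, h2⟩
  rw [hd_step1] at h1
  rw [step1_origin] at h2
  obtain ⟨s, k, _, hu⟩ := C3 u hLu h1 h2
  apply not_canon_mid s 3 1 k not_RB_31
  rw [hu] at hC
  rw [show (s ++ 3 :: List.replicate k 1) ++ [1] = s ++ 3 :: List.replicate (k+1) 1 by
    simp [List.replicate_succ']] at hC
  exact hC

lemma map_sub_one_map_add_one (l : List ℕ) : (l.map (· + 1)).map (· - 1) = l := by
  rw [List.map_map]
  have : ((· - 1) ∘ (· + 1) : ℕ → ℕ) = id := by funext x; simp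
  rw [this, List.map_id]

lemma peel_step3 (u : List ℕ) : peel (step (enc u) 3) = enc u := by
  unfold peel
  rw [peelQ_step3]
  apply cperm_ext
  · show ((step (enc u) 3).vals.tail).map (· - 1) = (enc u).vals
    rw [step3_vals, List.tail_cons, map_sub_one_map_add_one]
  · show (step (enc u) 3).origin - 1 = (enc u).origin
    rw [step3_origin]; omega

lemma peel_step4 (u : List ℕ) : peel (step (enc u) 4) = enc u := by
  unfold peel
  rw [peelQ_step4]
  apply cperm_ext
  · show ((step (enc u) 4).vals.dropLast).map (· - 1) = (enc u).vals
    rw [step4_vals, List.dropLast_concat, map_sub_one_map_add_one]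
  · show (step (enc u) 4).origin = (enc u).origin
    rfl

lemma peel_step2 (u : List ℕ) (hLu : Lw u) (hC : Canon (u ++ [2])) :
    peel (step (enc u) 2) = enc u := by
  unfold peel
  rw [peelQ_step2 u hLu hC]
  apply cperm_ext
  · show ((step (enc u) 2).vals.tail) = (enc u).vals
    rw [step2_vals, List.tail_cons]
  · show (step (enc u) 2).origin - 1 = (enc u).origin
    rw [step2_origin]; omega

lemma peel_step1 (u : List ℕ) (hLu : Lw u) (hC : Canon (u ++ [1])) :
    peel (step (enc u) 1) = enc u := by
  unfold peel
  rw [peelQ_step1 u hLu hC]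
  apply cperm_ext
  · show ((step (enc u) 1).vals.dropLast) = (enc u).vals
    rw [step1_vals, List.dropLast_concat]
  · rfl

/-- decode is a left inverse of enc on canonical words. -/
lemma dec : ∀ w, Lw w → Canon w → decodeAux w.length (enc w) = w := by
  intro w
  induction w using List.reverseRecOn with
  | nil => intro _ _; rfl
  | append_singleton u c ih =>
    intro hLw hC
    obtain ⟨hLu, hc⟩ := Lw_append_last hLw
    have hCu := Canon_prefix hC
    have hlen : (u ++ [c]).length = u.length + 1 := by simp
    rw [hlen, enc_snoc]
    show decodeAux u.length (peel (step (enc u) c)) ++ [peelQ (step (enc u) c)] = u ++ [c]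
    rcases hc with rfl|rfl|rfl|rfl
    · rw [peelQ_step1 u hLu hC, peel_step1 u hLu hC, ih hLu hCu]
    · rw [peelQ_step2 u hLu hC, peel_step2 u hLu hC, ih hLu hCu]
    · rw [peelQ_step3, peel_step3, ih hLu hCu]
    · rw [peelQ_step4, peel_step4, ih hLu hCu]

/-- enc is injective on canonical words. -/
lemma enc_inj {w w' : List ℕ} (hw : Lw w) (hw' : Lw w') (hC : Canon w) (hC' : Canon w')
    (h : enc w = enc w') : w = w' := by
  have hl : w.length = w'.length := by
    have h1 := enc_length w hw
    have h2 := enc_length w' hw'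
    rw [h] at h1
    omega
  rw [← dec w hw hC, ← dec w' hw' hC', h, hl]



/-! ### Pattern closure -/

lemma valid_getD_lt {p : CPerm} (hp : p.IsValid) {i : ℕ} (hi : i < p.vals.length) :
    p.vals.getD i 0 < p.vals.length := by
  apply valid_vals_lt hp
  rw [List.getD_eq_getElem _ 0 hi]
  exact List.getElem_mem hi

lemma valid_nodup {p : CPerm} (hp : p.IsValid) : p.vals.Nodup :=
  hp.2.2.nodup_iff.2 (List.nodup_range)

lemma valid_getD_inj {p : CPerm} (hp : p.IsValid) {i j : ℕ} (hi : i < p.vals.length)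
    (hj : j < p.vals.length) (h : p.vals.getD i 0 = p.vals.getD j 0) : i = j := by
  rw [List.getD_eq_getElem _ 0 hi, List.getD_eq_getElem _ 0 hj] at h
  exact (List.Nodup.getElem_inj_iff (valid_nodup hp)).1 h

lemma valid_exists_getD {p : CPerm} (hp : p.IsValid) {k : ℕ} (hk : k < p.vals.length) :
    ∃ j, j < p.vals.length ∧ p.vals.getD j 0 = k := by
  have : k ∈ p.vals := hp.2.2.symm.subset (List.mem_range.2 hk)
  obtain ⟨j, hj, hjk⟩ := List.mem_iff_getElem.1 this
  exact ⟨j, hj, by rw [List.getD_eq_getElem _ 0 hj]; exact hjk⟩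

lemma vals_cons_getD {p : CPerm} (h : p.vals ≠ []) :
    p.vals = p.vals.getD 0 0 :: p.vals.tail := by
  rcases hv : p.vals with _ | ⟨x, tl⟩
  · exact absurd hv h
  · rfl

lemma vals_concat_getD {p : CPerm} (h : p.vals ≠ []) :
    p.vals = p.vals.dropLast ++ [p.vals.getD (p.vals.length - 1) 0] := by
  conv_lhs => rw [← List.dropLast_append_getLast h]
  congr 2
  rw [List.getLast_eq_getElem, List.getD_eq_getElem _ 0 (by have := List.length_pos_iff.2 h; omega)]



lemma map_add_one_map_sub_one {l : List ℕ} (h : ∀ x ∈ l, 1 ≤ x) :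
    (l.map (· - 1)).map (· + 1) = l := by
  rw [List.map_map]
  conv_rhs => rw [← List.map_id l]
  apply List.map_congr_left
  intro x hx
  have := h x hx
  simp only [Function.comp_apply, id]
  omega

lemma pattern_closed : ∀ (w : List ℕ), Lw w → ∀ p : CPerm, p.IsValid →
    PatternLE p (enc w) → ∃ u, Lw u ∧ u.length + 1 = p.vals.length ∧ enc u = p := by
  intro w
  induction w using List.reverseRecOn with
  | nil =>
    intro _ p hp hle
    obtain ⟨f, hmono, hbound, horig, hval⟩ := hle
    have hm : 0 < p.vals.length := List.length_pos_iff.2 hp.1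
    have hm1 : p.vals.length = 1 := by
      by_contra h
      have h2 : 2 ≤ p.vals.length := by omega
      have := hmono 0 1 (by omega) (by omega) (by omega)
      have b0 := hbound 0 (by omega)
      have b1 := hbound 1 (by omega)
      simp [enc, CPerm.trivial] at b0 b1
      omega
    have hvals : p.vals = [0] := by
      have := hp.2.2
      rw [hm1] at this
      simpa [List.range_succ] using List.perm_singleton.1 this
    have horg : p.origin = 0 := by have := hp.2.1; omega
    refine ⟨[], by intro q hq; simp at hq, by simp [hm1], ?_⟩
    apply cperm_ext
    · simpa [enc, CPerm.trivial] using hvals.symm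
    · simpa [enc, CPerm.trivial] using horg.symm
  | append_singleton t c ih =>
    intro hLw p hp hle
    obtain ⟨hLt, hc⟩ := Lw_append_last hLw
    rw [enc_snoc] at hle
    obtain ⟨f, hmono, hbound, horig, hval⟩ := hle
    simp only [CPerm.valAt] at hval
    have hm : 0 < p.vals.length := List.length_pos_iff.2 hp.1
    have hpo : p.origin < p.vals.length := hp.2.1
    have hN : 0 < (enc t).vals.length := enc_vals_len_pos t
    have ho : (enc t).origin < (enc t).vals.length := enc_origin_lt t
    rcases hc with rfl|rfl|rfl|rfl
    · -- c = 1 : new point at last index, max value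
      simp only [step1_vals, step1_origin] at hval hbound horig
      simp only [List.length_append, List.length_cons, List.length_nil] at hbound
      by_cases hex : ∃ i, i < p.vals.length ∧ f i = (enc t).vals.length
      · obtain ⟨i₀, hi₀m, hfi₀⟩ := hex
        have hi₀ : i₀ = p.vals.length - 1 := by
          by_contra hne
          have h2 := hmono i₀ (p.vals.length - 1) hi₀m (by omega) (by omega)
          have h3 := hbound (p.vals.length - 1) (by omega)
          omega
        subst hi₀
        have hneo : p.origin ≠ p.vals.length - 1 := by
          intro h
          rw [← h] at hfi₀
          omega
        have hm2 : 2 ≤ p.vals.length := by omega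
        have hfmax : ∀ i, i < p.vals.length - 1 → f i < (enc t).vals.length := by
          intro i hi
          have := hmono i (p.vals.length - 1) (by omega) (by omega) hi
          omega
        have hvmax : p.vals.getD (p.vals.length - 1) 0 = p.vals.length - 1 := by
          obtain ⟨j, hj, hjv⟩ := valid_exists_getD hp (show p.vals.length - 1 < p.vals.length by omega)
          rcases eq_or_ne j (p.vals.length - 1) with rfl|hjne
          · exact hjv
          · exfalso
            have hfj : f j < (enc t).vals.length := hfmax j (by omega)
            have hiff := hval j (p.vals.length - 1) hj (by omega)
            rw [List.getD_append _ _ _ _ hfj, hfi₀,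
              List.getD_append_right _ _ _ _ (le_refl _)] at hiff
            simp only [Nat.sub_self, List.getD_cons_zero] at hiff
            have h4 : p.vals.getD j 0 < p.vals.getD (p.vals.length - 1) 0 :=
              hiff.2 (valid_getD_lt (enc_valid t) hfj)
            have h5 := valid_getD_lt hp (show p.vals.length - 1 < p.vals.length by omega)
            omega
        have hvcat : p.vals = p.vals.dropLast ++ [p.vals.length - 1] := by
          conv_lhs => rw [vals_concat_getD hp.1]
          rw [hvmax]
        have hdl : p.vals.dropLast.length = p.vals.length - 1 := by simp
        have hp' : (⟨p.vals.dropLast, p.origin⟩ : CPerm).IsValid := by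
          refine ⟨List.ne_nil_of_length_pos (by rw [hdl]; omega), by show p.origin < _; rw [hdl]; omega, ?_⟩
          show p.vals.dropLast.Perm (List.range p.vals.dropLast.length)
          rw [hdl]
          have h6 := hp.2.2
          rw [show p.vals.length = (p.vals.length - 1) + 1 by omega, List.range_succ] at h6
          conv at h6 => lhs; rw [hvcat]
          have h7 : ((p.vals.length - 1) :: p.vals.dropLast).Perm
              ((p.vals.length - 1) :: List.range (p.vals.length - 1)) :=
            ((List.perm_append_singleton _ _).symm.trans h6).trans (List.perm_append_singleton _ _)
          exact h7.cons_inv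
        have hemb : PatternLE ⟨p.vals.dropLast, p.origin⟩ (enc t) := by
          refine ⟨f, ?_, ?_, ?_, ?_⟩
          · intro i j hi hj hij
            rw [show (⟨p.vals.dropLast, p.origin⟩ : CPerm).vals = p.vals.dropLast from rfl, hdl] at hi hj
            exact hmono i j (by omega) (by omega) hij
          · intro i hi
            rw [show (⟨p.vals.dropLast, p.origin⟩ : CPerm).vals = p.vals.dropLast from rfl, hdl] at hi
            exact hfmax i hi
          · exact horig
          · intro i j hi hj
            rw [show (⟨p.vals.dropLast, p.origin⟩ : CPerm).vals = p.vals.dropLast from rfl, hdl] at hi hj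
            have e1 : ∀ k, k < p.vals.length - 1 →
                (⟨p.vals.dropLast, p.origin⟩ : CPerm).valAt k = p.vals.getD k 0 := by
              intro k hk
              show p.vals.dropLast.getD k 0 = p.vals.getD k 0
              conv_rhs => rw [hvcat]
              rw [List.getD_append _ _ _ _ (by rw [hdl]; omega)]
            have e2 : ∀ k, k < p.vals.length - 1 →
                (enc t).valAt (f k) = ((enc t).vals ++ [(enc t).vals.length]).getD (f k) 0 := by
              intro k hk
              show (enc t).vals.getD (f k) 0 = _
              rw [List.getD_append _ _ _ _ (hfmax k hk)]
            rw [e1 i hi, e1 j hj, e2 i hi, e2 j hj]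
            exact hval i j (by omega) (by omega)
        obtain ⟨u, hLu, hulen, hue⟩ := ih hLt _ hp' hemb
        refine ⟨u ++ [1], Lw_append hLu (by intro q hq; simp at hq; omega), ?_, ?_⟩
        · have : u.length + 1 = p.vals.dropLast.length := hulen
          rw [hdl] at this
          simp only [List.length_append, List.length_cons, List.length_nil]
          omega
        · rw [enc_snoc, hue]
          apply cperm_ext
          · show p.vals.dropLast ++ [p.vals.dropLast.length] = p.vals
            rw [hdl]
            exact hvcat.symm
          · exact rfl
      · -- top index not used : restrict to enc t
        push_neg at hex
        have hfa : ∀ i, i < p.vals.length → f i < (enc t).vals.length := by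
          intro i hi
          have h1 := hbound i hi
          have h2 := hex i hi
          omega
        refine ih hLt p hp ⟨f, hmono, hfa, horig, ?_⟩
        intro i j hi hj
        have e2 : ∀ k, k < p.vals.length →
            (enc t).valAt (f k) = ((enc t).vals ++ [(enc t).vals.length]).getD (f k) 0 := by
          intro k hk
          show (enc t).vals.getD (f k) 0 = _
          rw [List.getD_append _ _ _ _ (hfa k hk)]
        rw [e2 i hi, e2 j hj]
        exact hval i j hi hj
    · -- c = 2 : new point at index 0, max value
      simp only [step2_vals, step2_origin] at hval hbound horig
      simp only [List.length_cons] at hbound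
      by_cases hex : ∃ i, i < p.vals.length ∧ f i = 0
      · obtain ⟨i₀, hi₀m, hfi₀⟩ := hex
        have hi₀ : i₀ = 0 := by
          by_contra hne
          have := hmono 0 i₀ (by omega) hi₀m (by omega)
          omega
        subst hi₀
        have hneo : p.origin ≠ 0 := by
          intro h
          rw [h, hfi₀] at horig
          omega
        have hm2 : 2 ≤ p.vals.length := by omega
        have hfpos : ∀ i, 0 < i → i < p.vals.length → 1 ≤ f i := by
          intro i h1 h2
          have := hmono 0 i (by omega) h2 h1
          omega
        have hvmax : p.vals.getD 0 0 = p.vals.length - 1 := by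
          obtain ⟨j, hj, hjv⟩ := valid_exists_getD hp (show p.vals.length - 1 < p.vals.length by omega)
          rcases eq_or_ne j 0 with rfl|hjne
          · exact hjv
          · exfalso
            have hfj : 1 ≤ f j := hfpos j (by omega) hj
            have hiff := hval j 0 hj (by omega)
            rw [hfi₀] at hiff
            rw [show ((enc t).vals.length :: (enc t).vals).getD (f j) 0
                = (enc t).vals.getD (f j - 1) 0 by
              conv_lhs => rw [show f j = (f j - 1) + 1 by omega]
              rw [List.getD_cons_succ]] at hiff
            simp only [List.getD_cons_zero] at hiff
            have hfjb : f j - 1 < (enc t).vals.length := by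
              have := hbound j hj; omega
            have h4 : p.vals.getD j 0 < p.vals.getD 0 0 :=
              hiff.2 (valid_getD_lt (enc_valid t) hfjb)
            have h5 := valid_getD_lt hp (show 0 < p.vals.length by omega)
            omega
        have hvcons : p.vals = (p.vals.length - 1) :: p.vals.tail := by
          conv_lhs => rw [vals_cons_getD hp.1]
          rw [hvmax]
        have htl : p.vals.tail.length = p.vals.length - 1 := by simp
        have hp' : (⟨p.vals.tail, p.origin - 1⟩ : CPerm).IsValid := by
          refine ⟨List.ne_nil_of_length_pos (by rw [htl]; omega),
            by show p.origin - 1 < _; rw [htl]; omega, ?_⟩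
          show p.vals.tail.Perm (List.range p.vals.tail.length)
          rw [htl]
          have h6 := hp.2.2
          rw [show p.vals.length = (p.vals.length - 1) + 1 by omega, List.range_succ] at h6
          conv at h6 => lhs; rw [hvcons]
          have h7 : ((p.vals.length - 1) :: p.vals.tail).Perm
              ((p.vals.length - 1) :: List.range (p.vals.length - 1)) :=
            h6.trans (List.perm_append_singleton _ _)
          exact h7.cons_inv
        have hgtD : ∀ k, (p.vals.tail).getD k 0 = p.vals.getD (k+1) 0 := by
          intro k
          conv_rhs => rw [hvcons]
          rw [List.getD_cons_succ]
        have hemb : PatternLE ⟨p.vals.tail, p.origin - 1⟩ (enc t) :=  by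
          refine ⟨fun i => f (i+1) - 1, ?_, ?_, ?_, ?_⟩
          · intro i j hi hj hij
            rw [show (⟨p.vals.tail, p.origin - 1⟩ : CPerm).vals = p.vals.tail from rfl, htl] at hi hj
            show f (i+1) - 1 < f (j+1) - 1
            have h1 := hmono (i+1) (j+1) (by omega) (by omega) (by omega)
            have h2 := hfpos (i+1) (by omega) (by omega)
            omega
          · intro i hi
            rw [show (⟨p.vals.tail, p.origin - 1⟩ : CPerm).vals = p.vals.tail from rfl, htl] at hi
            show f (i+1) - 1 < (enc t).vals.length
            have := hbound (i+1) (by omega)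
            omega
          · show f (p.origin - 1 + 1) - 1 = (enc t).origin
            rw [show p.origin - 1 + 1 = p.origin by omega, horig]
            omega
          · intro i j hi hj
            rw [show (⟨p.vals.tail, p.origin - 1⟩ : CPerm).vals = p.vals.tail from rfl, htl] at hi hj
            have e1 : ∀ k, (⟨p.vals.tail, p.origin - 1⟩ : CPerm).valAt k = p.vals.getD (k+1) 0 := by
              intro k
              show p.vals.tail.getD k 0 = _
              exact hgtD k
            have e2 : ∀ k, k < p.vals.length - 1 →
                (enc t).valAt (f (k+1) - 1) = ((enc t).vals.length :: (enc t).vals).getD (f (k+1)) 0 := by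
              intro k hk
              have h9 : 1 ≤ f (k+1) := hfpos (k+1) (by omega) (by omega)
              show (enc t).vals.getD (f (k+1) - 1) 0 = _
              conv_rhs => rw [show f (k+1) = (f (k+1) - 1) + 1 by omega]
              rw [List.getD_cons_succ]
            rw [e1 i, e1 j, e2 i hi, e2 j hj]
            exact hval (i+1) (j+1) (by omega) (by omega)
        obtain ⟨u, hLu, hulen, hue⟩ := ih hLt _ hp' hemb
        refine ⟨u ++ [2], Lw_append hLu (by intro q hq; simp at hq; omega), ?_, ?_⟩
        · have : u.length + 1 = p.vals.tail.length := hulen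
          rw [htl] at this
          simp only [List.length_append, List.length_cons, List.length_nil]
          omega
        · rw [enc_snoc, hue]
          apply cperm_ext
          · show p.vals.tail.length :: p.vals.tail = p.vals
            rw [htl]
            exact hvcons.symm
          · show (p.origin - 1) + 1 = p.origin
            omega
      · -- index 0 not used
        push_neg at hex
        have hfpos : ∀ i, i < p.vals.length → 1 ≤ f i := by
          intro i hi
          have := hex i hi
          omega
        have hemb : PatternLE p (enc t) := by
          refine ⟨fun i => f i - 1, ?_, ?_, ?_, ?_⟩
          · intro i j hi hj hij
            show f i - 1 < f j - 1
            have h1 := hmono i j hi hj hij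
            have h2 := hfpos i hi
            omega
          · intro i hi
            show f i - 1 < (enc t).vals.length
            have := hbound i hi
            have := hex i hi
            omega
          · show f p.origin - 1 = (enc t).origin
            omega

          · intro i j hi hj
            have e2 : ∀ k, k < p.vals.length →
                (enc t).valAt (f k - 1) = ((enc t).vals.length :: (enc t).vals).getD (f k) 0 := by
              intro k hk
              have h9 := hfpos k hk
              show (enc t).vals.getD (f k - 1) 0 = _
              conv_rhs => rw [show f k = (f k - 1) + 1 by omega]
              rw [List.getD_cons_succ]
            rw [e2 i hi, e2 j hj]
            exact hval i j hi hj
        exact ih hLt p hp hemb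
    · -- c = 3 : new point at index 0, value 0
      simp only [step3_vals, step3_origin] at hval hbound horig
      simp only [List.length_cons, List.length_map] at hbound
      have hq3 : ∀ x, 1 ≤ x → x < (enc t).vals.length + 1 →
          (0 :: (enc t).vals.map (· + 1)).getD x 0 = (enc t).vals.getD (x-1) 0 + 1 := by
        intro x h1 h2
        conv_lhs => rw [show x = (x-1)+1 by omega]
        rw [List.getD_cons_succ, List.getD_eq_getElem _ 0 (by rw [List.length_map]; omega),
          List.getElem_map, ← List.getD_eq_getElem _ 0 (by omega)]
      by_cases hex : ∃ i, i < p.vals.length ∧ f i = 0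
      · obtain ⟨i₀, hi₀m, hfi₀⟩ := hex
        have hi₀ : i₀ = 0 := by
          by_contra hne
          have := hmono 0 i₀ (by omega) hi₀m (by omega)
          omega
        subst hi₀
        have hneo : p.origin ≠ 0 := by
          intro h
          rw [h, hfi₀] at horig
          omega
        have hm2 : 2 ≤ p.vals.length := by omega
        have hfpos : ∀ i, 0 < i → i < p.vals.length → 1 ≤ f i := by
          intro i h1 h2
          have := hmono 0 i (by omega) h2 h1
          omega
        have hv0 : p.vals.getD 0 0 = 0 := by
          obtain ⟨j, hj, hjv⟩ := valid_exists_getD hp (show 0 < p.vals.length by omega)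
          rcases eq_or_ne j 0 with rfl|hjne
          · exact hjv
          · exfalso
            have hfj : 1 ≤ f j := hfpos j (by omega) hj
            have hiff := hval 0 j (by omega) hj
            rw [hfi₀] at hiff
            rw [hq3 (f j) hfj (hbound j hj)] at hiff
            simp only [List.getD_cons_zero] at hiff
            have h4 : p.vals.getD 0 0 < p.vals.getD j 0 := hiff.2 (by omega)
            omega
        have hvcons : p.vals = 0 :: p.vals.tail := by
          conv_lhs => rw [vals_cons_getD hp.1]
          rw [hv0]
        have htl : p.vals.tail.length = p.vals.length - 1 := by simp
        have hnd := valid_nodup hp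
        have htpos : ∀ x ∈ p.vals.tail, 1 ≤ x := by
          intro x hx
          rcases Nat.eq_zero_or_pos x with rfl|h
          · exfalso
            rw [hvcons, List.nodup_cons] at hnd
            exact hnd.1 hx
          · exact h
        have hperm : p.vals.tail.Perm ((List.range (p.vals.length - 1)).map (· + 1)) := by
          have h6 := hp.2.2
          rw [show p.vals.length = (p.vals.length - 1) + 1 by omega, List.range_succ_eq_map] at h6
          conv at h6 => lhs; rw [hvcons]
          have h7 := h6.cons_inv
          have h8 : (List.range (p.vals.length - 1)).map Nat.succ
              = (List.range (p.vals.length - 1)).map (· + 1) := by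
            apply List.map_congr_left; intro x _; omega
          rw [h8] at h7
          exact h7
        have hp' : (⟨p.vals.tail.map (· - 1), p.origin - 1⟩ : CPerm).IsValid := by
          refine ⟨List.ne_nil_of_length_pos (by rw [List.length_map, htl]; omega),
            by show p.origin - 1 < _; rw [List.length_map, htl]; omega, ?_⟩
          show (p.vals.tail.map (· - 1)).Perm (List.range (p.vals.tail.map (· - 1)).length)
          rw [List.length_map, htl]
          have := hperm.map (· - 1)
          rw [map_sub_one_map_add_one] at this
          exact this
        have hgtD : ∀ k, (p.vals.tail).getD k 0 = p.vals.getD (k+1) 0 := by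
          intro k
          conv_rhs => rw [hvcons]
          rw [List.getD_cons_succ]
        have hvpos : ∀ k, k + 1 < p.vals.length → 1 ≤ p.vals.getD (k+1) 0 := by
          intro k hk
          rcases Nat.eq_zero_or_pos (p.vals.getD (k+1) 0) with h|h
          · exfalso
            have := valid_getD_inj hp (show k+1 < p.vals.length by omega)
              (show 0 < p.vals.length by omega) (by rw [h, hv0])
            omega
          · exact h
        have eL : ∀ k, k < p.vals.length - 1 →
            (⟨p.vals.tail.map (· - 1), p.origin - 1⟩ : CPerm).valAt k = p.vals.getD (k+1) 0 - 1 := by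
          intro k hk
          show (p.vals.tail.map (· - 1)).getD k 0 = _
          rw [List.getD_eq_getElem _ 0 (by rw [List.length_map, htl]; omega), List.getElem_map,
            ← List.getD_eq_getElem _ 0 (by rw [htl]; omega), hgtD]
        have hemb : PatternLE ⟨p.vals.tail.map (· - 1), p.origin - 1⟩ (enc t) := by
          refine ⟨fun i => f (i+1) - 1, ?_, ?_, ?_, ?_⟩
          · intro i j hi hj hij
            rw [show (⟨p.vals.tail.map (· - 1), p.origin - 1⟩ : CPerm).vals
              = p.vals.tail.map (· - 1) from rfl, List.length_map, htl] at hi hj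
            show f (i+1) - 1 < f (j+1) - 1
            have h1 := hmono (i+1) (j+1) (by omega) (by omega) (by omega)
            have h2 := hfpos (i+1) (by omega) (by omega)
            omega
          · intro i hi
            rw [show (⟨p.vals.tail.map (· - 1), p.origin - 1⟩ : CPerm).vals
              = p.vals.tail.map (· - 1) from rfl, List.length_map, htl] at hi
            show f (i+1) - 1 < (enc t).vals.length
            have := hbound (i+1) (by omega)
            omega
          · show f (p.origin - 1 + 1) - 1 = (enc t).origin
            rw [show p.origin - 1 + 1 = p.origin by omega, horig]
            omega
          · intro i j hi hj
            rw [show (⟨p.vals.tail.map (· - 1), p.origin - 1⟩ : CPerm).vals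
              = p.vals.tail.map (· - 1) from rfl, List.length_map, htl] at hi hj
            have hfi : 1 ≤ f (i+1) := hfpos (i+1) (by omega) (by omega)
            have hfj : 1 ≤ f (j+1) := hfpos (j+1) (by omega) (by omega)
            have h10 := hval (i+1) (j+1) (by omega) (by omega)
            rw [hq3 (f (i+1)) hfi (hbound (i+1) (by omega)),
              hq3 (f (j+1)) hfj (hbound (j+1) (by omega))] at h10
            rw [eL i hi, eL j hj]
            show _ ↔ (enc t).vals.getD (f (i+1) - 1) 0 < (enc t).vals.getD (f (j+1) - 1) 0
            have hpi := hvpos i (by omega)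
            have hpj := hvpos j (by omega)
            omega
        obtain ⟨u, hLu, hulen, hue⟩ := ih hLt _ hp' hemb
        refine ⟨u ++ [3], Lw_append hLu (by intro q hq; simp at hq; omega), ?_, ?_⟩
        · have : u.length + 1 = (p.vals.tail.map (· - 1)).length := hulen
          rw [List.length_map, htl] at this
          simp only [List.length_append, List.length_cons, List.length_nil]
          omega
        · rw [enc_snoc, hue]
          apply cperm_ext
          · show 0 :: (p.vals.tail.map (· - 1)).map (· + 1) = p.vals
            rw [map_add_one_map_sub_one htpos]
            exact hvcons.symm
          · show (p.origin - 1) + 1 = p.origin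
            omega
      · push_neg at hex
        have hfpos : ∀ i, i < p.vals.length → 1 ≤ f i := by
          intro i hi
          have := hex i hi
          omega
        have hemb : PatternLE p (enc t) := by
          refine ⟨fun i => f i - 1, ?_, ?_, ?_, ?_⟩
          · intro i j hi hj hij
            show f i - 1 < f j - 1
            have h1 := hmono i j hi hj hij
            have h2 := hfpos i hi
            omega
          · intro i hi
            show f i - 1 < (enc t).vals.length
            have := hbound i hi
            have := hfpos i hi
            omega
          · show f p.origin - 1 = (enc t).origin
            omega
          · intro i j hi hj
            have h10 := hval i j hi hj
            rw [hq3 (f i) (hfpos i hi) (hbound i hi), hq3 (f j) (hfpos j hj) (hbound j hj)] at h10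
            show p.vals.getD i 0 < p.vals.getD j 0 ↔
              (enc t).vals.getD (f i - 1) 0 < (enc t).vals.getD (f j - 1) 0
            omega
        exact ih hLt p hp hemb
    · -- c = 4 : new point at last index, value 0
      simp only [step4_vals, step4_origin] at hval hbound horig
      simp only [List.length_append, List.length_map, List.length_cons, List.length_nil] at hbound
      have hq4 : ∀ x, x < (enc t).vals.length →
          ((enc t).vals.map (· + 1) ++ [0]).getD x 0 = (enc t).vals.getD x 0 + 1 := by
        intro x hx
        rw [List.getD_append _ _ _ _ (by rw [List.length_map]; omega),
          List.getD_eq_getElem _ 0 (by rw [List.length_map]; omega), List.getElem_map,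
          ← List.getD_eq_getElem _ 0 (by omega)]
      have hq4' : ((enc t).vals.map (· + 1) ++ [0]).getD ((enc t).vals.length) 0 = 0 := by
        rw [List.getD_append_right _ _ _ _ (by rw [List.length_map])]
        simp
      by_cases hex : ∃ i, i < p.vals.length ∧ f i = (enc t).vals.length
      · obtain ⟨i₀, hi₀m, hfi₀⟩ := hex
        have hi₀ : i₀ = p.vals.length - 1 := by
          by_contra hne
          have h2 := hmono i₀ (p.vals.length - 1) hi₀m (by omega) (by omega)
          have h3 := hbound (p.vals.length - 1) (by omega)
          omega
        subst hi₀
        have hneo : p.origin ≠ p.vals.length - 1 := by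
          intro h
          rw [← h] at hfi₀
          omega
        have hm2 : 2 ≤ p.vals.length := by omega
        have hfmax : ∀ i, i < p.vals.length - 1 → f i < (enc t).vals.length := by
          intro i hi
          have := hmono i (p.vals.length - 1) (by omega) (by omega) hi
          omega
        have hv0 : p.vals.getD (p.vals.length - 1) 0 = 0 := by
          obtain ⟨j, hj, hjv⟩ := valid_exists_getD hp (show 0 < p.vals.length by omega)
          rcases eq_or_ne j (p.vals.length - 1) with rfl|hjne
          · exact hjv
          · exfalso
            have hfj := hfmax j (by omega)
            have hiff := hval (p.vals.length - 1) j (by omega) hj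
            rw [hfi₀, hq4', hq4 (f j) hfj] at hiff
            have h4 : p.vals.getD (p.vals.length - 1) 0 < p.vals.getD j 0 := hiff.2 (by omega)
            omega
        have hvcat : p.vals = p.vals.dropLast ++ [0] := by
          conv_lhs => rw [vals_concat_getD hp.1]
          rw [hv0]
        have hdl : p.vals.dropLast.length = p.vals.length - 1 := by simp
        have hperm : p.vals.dropLast.Perm ((List.range (p.vals.length - 1)).map (· + 1)) := by
          have h6 := hp.2.2
          rw [show p.vals.length = (p.vals.length - 1) + 1 by omega, List.range_succ_eq_map] at h6
          conv at h6 => lhs; rw [hvcat]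
          have h7 := ((List.perm_append_singleton _ _).symm.trans h6).cons_inv
          have h8 : (List.range (p.vals.length - 1)).map Nat.succ
              = (List.range (p.vals.length - 1)).map (· + 1) := by
            apply List.map_congr_left; intro x _; omega
          rw [h8] at h7
          exact h7
        have hdpos : ∀ x ∈ p.vals.dropLast, 1 ≤ x := by
          intro x hx
          have := hperm.subset hx
          obtain ⟨y, _, rfl⟩ := List.mem_map.1 this
          omega
        have hp' : (⟨p.vals.dropLast.map (· - 1), p.origin⟩ : CPerm).IsValid := by
          refine ⟨List.ne_nil_of_length_pos (by rw [List.length_map, hdl]; omega),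
            by show p.origin < _; rw [List.length_map, hdl]; omega, ?_⟩
          show (p.vals.dropLast.map (· - 1)).Perm (List.range (p.vals.dropLast.map (· - 1)).length)
          rw [List.length_map, hdl]
          have := hperm.map (· - 1)
          rw [map_sub_one_map_add_one] at this
          exact this
        have hgtD : ∀ k, k < p.vals.length - 1 →
            (p.vals.dropLast).getD k 0 = p.vals.getD k 0 := by
          intro k hk
          conv_rhs => rw [hvcat]
          rw [List.getD_append _ _ _ _ (by rw [hdl]; omega)]
        have hvpos : ∀ k, k < p.vals.length - 1 → 1 ≤ p.vals.getD k 0 := by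
          intro k hk
          rcases Nat.eq_zero_or_pos (p.vals.getD k 0) with h|h
          · exfalso
            have := valid_getD_inj hp (show k < p.vals.length by omega)
              (show p.vals.length - 1 < p.vals.length by omega) (by rw [h, hv0])
            omega
          · exact h
        have eL : ∀ k, k < p.vals.length - 1 →
            (⟨p.vals.dropLast.map (· - 1), p.origin⟩ : CPerm).valAt k = p.vals.getD k 0 - 1 := by
          intro k hk
          show (p.vals.dropLast.map (· - 1)).getD k 0 = _
          rw [List.getD_eq_getElem _ 0 (by rw [List.length_map, hdl]; omega), List.getElem_map,
            ← List.getD_eq_getElem _ 0 (by rw [hdl]; omega), hgtD k hk]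
        have hemb : PatternLE ⟨p.vals.dropLast.map (· - 1), p.origin⟩ (enc t) := by
          refine ⟨f, ?_, ?_, ?_, ?_⟩
          · intro i j hi hj hij
            rw [show (⟨p.vals.dropLast.map (· - 1), p.origin⟩ : CPerm).vals
              = p.vals.dropLast.map (· - 1) from rfl, List.length_map, hdl] at hi hj
            exact hmono i j (by omega) (by omega) hij
          · intro i hi
            rw [show (⟨p.vals.dropLast.map (· - 1), p.origin⟩ : CPerm).vals
              = p.vals.dropLast.map (· - 1) from rfl, List.length_map, hdl] at hi
            exact hfmax i hi
          · exact horig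
          · intro i j hi hj
            rw [show (⟨p.vals.dropLast.map (· - 1), p.origin⟩ : CPerm).vals
              = p.vals.dropLast.map (· - 1) from rfl, List.length_map, hdl] at hi hj
            have h10 := hval i j (by omega) (by omega)
            rw [hq4 (f i) (hfmax i hi), hq4 (f j) (hfmax j hj)] at h10
            rw [eL i hi, eL j hj]
            show _ ↔ (enc t).vals.getD (f i) 0 < (enc t).vals.getD (f j) 0
            have hpi := hvpos i (by omega)
            have hpj := hvpos j (by omega)
            omega
        obtain ⟨u, hLu, hulen, hue⟩ := ih hLt _ hp' hemb
        refine ⟨u ++ [4], Lw_append hLu (by intro q hq; simp at hq; omega), ?_, ?_⟩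
        · have : u.length + 1 = (p.vals.dropLast.map (· - 1)).length := hulen
          rw [List.length_map, hdl] at this
          simp only [List.length_append, List.length_cons, List.length_nil]
          omega
        · rw [enc_snoc, hue]
          apply cperm_ext
          · show (p.vals.dropLast.map (· - 1)).map (· + 1) ++ [0] = p.vals
            rw [map_add_one_map_sub_one hdpos]
            exact hvcat.symm
          · exact rfl
      · push_neg at hex
        have hfa : ∀ i, i < p.vals.length → f i < (enc t).vals.length := by
          intro i hi
          have h1 := hbound i hi
          have h2 := hex i hi
          omega
        have hemb : PatternLE p (enc t) := by
          refine ⟨f, hmono, hfa, horig, ?_⟩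
          intro i j hi hj
          have h10 := hval i j hi hj
          rw [hq4 (f i) (hfa i hi), hq4 (f j) (hfa j hj)] at h10
          show p.vals.getD i 0 < p.vals.getD j 0 ↔
            (enc t).vals.getD (f i) 0 < (enc t).vals.getD (f j) 0
          omega
        exact ih hLt p hp hemb



/-! ### Canonical word lists and counting -/

def allowed (w : List ℕ) : List ℕ :=
  if w.head? = some 1 then [1,2,4] else if w.head? = some 2 then [1,2,3] else [1,2,3,4]

def canonList : ℕ → List (List ℕ)
  | 0 => [[]]
  | (n+1) => (canonList n).flatMap (fun w => (allowed w).map (· :: w))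

lemma mem_allowed {c : ℕ} {u : List ℕ} :
    c ∈ allowed u ↔ ((c = 1 ∨ c = 2 ∨ c = 3 ∨ c = 4) ∧ ∀ x ∈ u.head?, RB c x) := by
  unfold allowed
  by_cases h1 : u.head? = some 1
  · simp only [h1, if_pos]
    constructor
    · intro hc
      refine ⟨by simp at hc; omega, ?_⟩
      intro x hx
      simp only [Option.mem_def, Option.some.injEq] at hx
      subst hx
      apply RB_ne3_1
      simp at hc; omega
    · rintro ⟨hc, hr⟩
      have := hr 1 rfl
      rcases hc with rfl|rfl|rfl|rfl <;> simp_all [RB]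
  · by_cases h2 : u.head? = some 2
    · simp only [h1, if_neg, h2, if_pos]
      constructor
      · intro hc
        refine ⟨by simp at hc; omega, ?_⟩
        intro x hx
        simp only [h2, Option.mem_def, Option.some.injEq] at hx ⊢
        subst hx
        apply RB_ne4_2
        simp at hc; omega
      · rintro ⟨hc, hr⟩
        have := hr 2 rfl
        rcases hc with rfl|rfl|rfl|rfl <;> simp_all [RB]
    · rw [if_neg h1, if_neg h2]
      constructor
      · intro hc
        refine ⟨by simp at hc; omega, ?_⟩
        intro x hx
        constructor
        · rintro ⟨_, rfl⟩
          exact h1 hx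
        · rintro ⟨_, rfl⟩
          exact h2 hx
      · rintro ⟨hc, _⟩
        simp
        omega

lemma mem_canonList {n : ℕ} {w : List ℕ} :
    w ∈ canonList n ↔ (w.length = n ∧ Lw w ∧ Canon w) := by
  induction n generalizing w with
  | zero =>
    simp only [canonList, List.mem_singleton]
    constructor
    · rintro rfl
      exact ⟨rfl, by intro q hq; simp at hq, List.isChain_nil⟩
    · rintro ⟨h, _, _⟩
      exact List.eq_nil_of_length_eq_zero h
  | succ n ih =>
    simp only [canonList, List.mem_flatMap, List.mem_map]
    constructor
    · rintro ⟨u, hu, c, hc, rfl⟩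
      obtain ⟨hul, hLu, hCu⟩ := ih.1 hu
      obtain ⟨hc4, hrb⟩ := mem_allowed.1 hc
      refine ⟨by simp [hul], ?_, ?_⟩
      · intro q hq
        rcases List.mem_cons.1 hq with rfl|hq
        · exact hc4
        · exact hLu q hq
      · exact List.isChain_cons.2 ⟨hrb, hCu⟩
    · rintro ⟨hlen, hLw, hCw⟩
      rcases w with _|⟨c, u⟩
      · simp at hlen
      refine ⟨u, ih.2 ⟨by simpa using hlen, fun q hq => hLw q (List.mem_cons_of_mem _ hq),
        (List.isChain_cons.1 hCw).2⟩, c, ?_, rfl⟩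
      exact mem_allowed.2 ⟨hLw c (List.mem_cons_self), (List.isChain_cons.1 hCw).1⟩

lemma nodup_flatMap_of {α β : Type*} (l : List α) (f : α → List β) (hl : l.Nodup)
    (hf : ∀ a ∈ l, (f a).Nodup)
    (hdisj : ∀ a ∈ l, ∀ b ∈ l, ∀ x, x ∈ f a → x ∈ f b → a = b) : (l.flatMap f).Nodup := by
  induction l with
  | nil => simp
  | cons a l ih =>
    rw [List.flatMap_cons]
    apply List.Nodup.append
    · exact hf a (List.mem_cons_self)
    · apply ih (List.Nodup.of_cons hl)
      · intro b hb; exact hf b (List.mem_cons_of_mem _ hb)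
      · intro b hb b' hb' x hx hx'
        exact hdisj b (List.mem_cons_of_mem _ hb) b' (List.mem_cons_of_mem _ hb') x hx hx'
    · intro x hx hx'
      rw [List.mem_flatMap] at hx'
      obtain ⟨b, hb, hxb⟩ := hx'
      have : a = b := hdisj a (List.mem_cons_self) b (List.mem_cons_of_mem _ hb) x hx hxb
      subst this
      rw [List.nodup_cons] at hl
      exact hl.1 hb

lemma allowed_nodup (w : List ℕ) : (allowed w).Nodup := by
  unfold allowed
  by_cases h1 : w.head? = some 1
  · simp [h1]
  · by_cases h2 : w.head? = some 2 <;> simp [h1, h2]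

lemma canonList_nodup (n : ℕ) : (canonList n).Nodup := by
  induction n with
  | zero => simp [canonList]
  | succ n ih =>
    apply nodup_flatMap_of _ _ ih
    · intro a _
      exact (allowed_nodup a).map (fun x y h => by simpa using (List.cons.injEq _ _ _ _ ▸ h).1)
    · intro a _ b _ x hx hx'
      obtain ⟨c, _, rfl⟩ := List.mem_map.1 hx
      obtain ⟨c', _, h⟩ := List.mem_map.1 hx'
      exact (List.cons.injEq _ _ _ _ ▸ h).2.symm

lemma countP_flatMap {α β : Type*} (p : β → Bool) (l : List α) (f : α → List β) :
    (l.flatMap f).countP p = (l.map (fun a => (f a).countP p)).sum := by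
  induction l with
  | nil => simp
  | cons a l ih => rw [List.flatMap_cons, List.countP_append, ih]; simp

lemma countP_head_one (n : ℕ) :
    (canonList (n+1)).countP (fun w => w.head? == some 1) = (canonList n).length := by
  rw [show canonList (n+1) = (canonList n).flatMap (fun w => (allowed w).map (· :: w)) from rfl,
    countP_flatMap]
  have : ∀ w ∈ canonList n,
      ((allowed w).map (· :: w)).countP (fun w => w.head? == some 1) = 1 := by
    intro w _
    rw [List.countP_map]
    have : ((fun w : List ℕ => w.head? == some 1) ∘ (· :: w)) = (fun c => c == 1) := by
      funext c; simp
    rw [this]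
    unfold allowed
    by_cases h1 : w.head? = some 1
    · simp [h1]
    · by_cases h2 : w.head? = some 2 <;> simp [h1, h2]
  rw [List.map_congr_left this, List.map_const', List.sum_replicate]
  simp

lemma countP_head_two (n : ℕ) :
    (canonList (n+1)).countP (fun w => w.head? == some 2) = (canonList n).length := by
  rw [show canonList (n+1) = (canonList n).flatMap (fun w => (allowed w).map (· :: w)) from rfl,
    countP_flatMap]
  have : ∀ w ∈ canonList n,
      ((allowed w).map (· :: w)).countP (fun w => w.head? == some 2) = 1 := by
    intro w _
    rw [List.countP_map]
    have : ((fun w : List ℕ => w.head? == some 2) ∘ (· :: w)) = (fun c => c == 2) := by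
      funext c; simp
    rw [this]
    unfold allowed
    by_cases h1 : w.head? = some 1
    · simp [h1]
    · by_cases h2 : w.head? = some 2 <;> simp [h1, h2]
  rw [List.map_congr_left this, List.map_const', List.sum_replicate]
  simp

lemma canonList_succ_length (n : ℕ) :
    (canonList (n+1)).length
      + (canonList n).countP (fun w => w.head? == some 1)
      + (canonList n).countP (fun w => w.head? == some 2)
      = 4 * (canonList n).length := by
  rw [show canonList (n+1) = (canonList n).flatMap (fun w => (allowed w).map (· :: w)) from rfl]
  induction canonList n with
  | nil => simp
  | cons w l ih =>
    rw [List.flatMap_cons, List.length_append, List.countP_cons, List.countP_cons,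
      List.length_cons]
    have hpoint : ((allowed w).map (· :: w)).length
        + (if (w.head? == some 1) = true then 1 else 0)
        + (if (w.head? == some 2) = true then 1 else 0) = 4 := by
      rw [List.length_map]
      unfold allowed
      by_cases h1 : w.head? = some 1
      · simp [h1]
      · by_cases h2 : w.head? = some 2 <;> simp [h1, h2]
    omega

lemma canonList_rec (n : ℕ) :
    (canonList (n+2)).length + 2 * (canonList n).length = 4 * (canonList (n+1)).length := by
  have h := canonList_succ_length (n+1)
  rw [countP_head_one, countP_head_two] at h
  have h2 : (canonList (n+2)).length + (canonList n).length + (canonList n).length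
      = 4 * (canonList (n+1)).length := h
  omega

lemma canonList_zero_length : (canonList 0).length = 1 := rfl

lemma canonList_one_length : (canonList 1).length = 4 := by
  rfl








lemma patternLE_refl (p : CPerm) : PatternLE p p :=
  ⟨id, fun _ _ _ _ h => h, fun _ hi => hi, rfl, fun _ _ _ _ => Iff.rfl⟩

lemma exists_word : ∀ l : List CPerm, (∀ y ∈ l, ∃ q : ℕ, q ∈ ({1,2,3,4} : Set ℕ) ∧ y = mu q) →
    ∃ w : List ℕ, Lw w ∧ l = w.map mu := by
  intro l
  induction l with
  | nil => intro _; exact ⟨[], by intro q hq; simp at hq, rfl⟩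
  | cons y l ih =>
    intro h
    obtain ⟨q, hq, rfl⟩ := h _ (List.mem_cons_self)
    obtain ⟨w, hLw, rfl⟩ := ih (fun z hz => h z (List.mem_cons_of_mem _ hz))
    refine ⟨q :: w, ?_, rfl⟩
    intro x hx
    rcases List.mem_cons.1 hx with rfl|hx
    · simpa using hq
    · exact hLw x hx

lemma xclass_eq (n : ℕ) :
    {p : CPerm | p ∈ XClass ∧ p.len = n} = ↑((canonList n).toFinset.image enc) := by
  ext p
  simp only [Set.mem_setOf_eq, Finset.coe_image, Set.mem_image, Finset.mem_coe,
    List.mem_toFinset]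
  constructor
  · rintro ⟨⟨hvalid, l, hl, hle⟩, hlen⟩
    obtain ⟨w₀, hLw₀, rfl⟩ := exists_word l hl
    rw [boxSumList_map_mu] at hle
    obtain ⟨u, hLu, hulen, hue⟩ := pattern_closed w₀ hLw₀ p hvalid hle
    obtain ⟨w, hLw, hCw, hwlen, hwe⟩ := norm u.length u le_rfl hLu
    refine ⟨w, mem_canonList.2 ⟨?_, hLw, hCw⟩, by rw [hwe, hue]⟩
    unfold CPerm.len at hlen
    omega
  · rintro ⟨w, hw, rfl⟩
    obtain ⟨hwlen, hLw, hCw⟩ := mem_canonList.1 hw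
    refine ⟨⟨enc_valid w, w.map mu, ?_, ?_⟩, ?_⟩
    · intro y hy
      obtain ⟨q, hq, rfl⟩ := List.mem_map.1 hy
      exact ⟨q, by simpa using hLw q hq, rfl⟩
    · rw [boxSumList_map_mu]; exact patternLE_refl _
    · show (enc w).vals.length - 1 = n
      rw [enc_length w hLw]
      omega

lemma count_eq (n : ℕ) : CPerm.count XClass n = (canonList n).length := by
  unfold CPerm.count
  rw [xclass_eq n, Set.ncard_coe_finset]
  rw [Finset.card_image_of_injOn, List.toFinset_card_of_nodup (canonList_nodup n)]
  intro w hw w' hw' he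
  simp only [Finset.coe_insert, List.coe_toFinset, Set.mem_setOf_eq] at hw hw'
  obtain ⟨_, hLw, hCw⟩ := mem_canonList.1 hw
  obtain ⟨_, hLw', hCw'⟩ := mem_canonList.1 hw'
  exact enc_inj hLw hLw' hCw hCw' he

lemma count_zero : CPerm.count XClass 0 = 1 := by rw [count_eq]; rfl

lemma count_one : CPerm.count XClass 1 = 4 := by rw [count_eq]; rfl

lemma count_rec (n : ℕ) : CPerm.count XClass (n+2) + 2 * CPerm.count XClass n
    = 4 * CPerm.count XClass (n+1) := by
  rw [count_eq, count_eq, count_eq]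
  exact canonList_rec n

/-! ### Analysis -/

lemma sqrt2_sq : Real.sqrt 2 * Real.sqrt 2 = 2 := Real.mul_self_sqrt (by norm_num)
lemma sqrt2_ge_one : (1:ℝ) ≤ Real.sqrt 2 := by
  nlinarith [sqrt2_sq, Real.sqrt_nonneg 2]
lemma sqrt2_le : Real.sqrt 2 ≤ 1.5 := by
  nlinarith [sqrt2_sq, Real.sqrt_nonneg 2]

noncomputable def lam : ℝ := 2 + Real.sqrt 2
noncomputable def mu' : ℝ := 2 - Real.sqrt 2

lemma lam_pos : 0 < lam := by unfold lam; nlinarith [sqrt2_ge_one]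
lemma mu'_nonneg : 0 ≤ mu' := by unfold mu'; nlinarith [sqrt2_le]
lemma lam_add_mu' : lam + mu' = 4 := by unfold lam mu'; ring
lemma lam_mul_mu' : lam * mu' = 2 := by unfold lam mu'; nlinarith [sqrt2_sq]

noncomputable def cnt : ℕ → ℝ := fun n => (CPerm.count XClass n : ℝ)

lemma cnt_nonneg (n : ℕ) : 0 ≤ cnt n := Nat.cast_nonneg _
lemma cnt_zero : cnt 0 = 1 := by unfold cnt; rw [count_zero]; norm_num
lemma cnt_one : cnt 1 = 4 := by unfold cnt; rw [count_one]; norm_num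
lemma cnt_rec (n : ℕ) : cnt (n+2) = 4 * cnt (n+1) - 2 * cnt n := by
  have h := count_rec n
  unfold cnt
  have := congrArg (fun k : ℕ => (k : ℝ)) h
  push_cast at this
  linarith

lemma cnt_step : ∀ n, lam * cnt n ≤ cnt (n+1) := by
  intro n
  induction n with
  | zero =>
    rw [cnt_zero, cnt_one, mul_one]
    unfold lam; nlinarith [sqrt2_le]
  | succ n ih =>
    rw [cnt_rec n]
    have h1 : 0 ≤ mu' := mu'_nonneg
    have h2 : lam * mu' = 2 := lam_mul_mu'
    have h3 : lam + mu' = 4 := lam_add_mu'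
    have h4 : 0 ≤ cnt n := cnt_nonneg n
    have h5 : mu' * (lam * cnt n) ≤ mu' * cnt (n+1) := mul_le_mul_of_nonneg_left ih h1
    have h6 : mu' * (lam * cnt n) = 2 * cnt n := by
      rw [show mu' * (lam * cnt n) = (lam * mu') * cnt n by ring, h2]
    have h7 : mu' * cnt (n+1) + lam * cnt (n+1) = 4 * cnt (n+1) := by
      calc mu' * cnt (n+1) + lam * cnt (n+1) = (lam + mu') * cnt (n+1) := by ring
        _ = 4 * cnt (n+1) := by rw [h3]
    linarith

lemma cnt_low : ∀ n, lam ^ n ≤ cnt n := by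
  intro n
  induction n with
  | zero => rw [cnt_zero]; norm_num
  | succ n ih =>
    calc lam ^ (n+1) = lam * lam ^ n := by ring
    _ ≤ lam * cnt n := by
        apply mul_le_mul_of_nonneg_left ih (le_of_lt lam_pos)
    _ ≤ cnt (n+1) := cnt_step n

lemma cnt_geom : ∀ n, cnt (n+1) = lam ^ (n+1) + mu' * cnt n := by
  intro n
  induction n with
  | zero =>
    rw [cnt_zero, cnt_one, mul_one, pow_one]
    linarith [lam_add_mu']
  | succ n ih =>
    have h2 : lam * mu' = 2 := lam_mul_mu'
    have h3 : lam + mu' = 4 := lam_add_mu'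
    calc cnt (n+2) = 4 * cnt (n+1) - 2 * cnt n := cnt_rec n
    _ = (lam + mu') * cnt (n+1) - (lam * mu') * cnt n := by rw [h2, h3]
    _ = lam * (cnt (n+1) - mu' * cnt n) + mu' * cnt (n+1) := by ring
    _ = lam * lam ^ (n+1) + mu' * cnt (n+1) := by rw [ih]; ring
    _ = lam ^ (n+2) + mu' * cnt (n+1) := by ring

lemma cnt_up : ∀ n, cnt n ≤ 2 * lam ^ n := by
  intro n
  induction n with
  | zero => rw [cnt_zero]; norm_num
  | succ n ih =>
    rw [cnt_geom n]
    have h1 : mu' * cnt n ≤ mu' * (2 * lam ^ n) :=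
      mul_le_mul_of_nonneg_left ih mu'_nonneg
    have h2 : lam ^ (n+1) + mu' * (2 * lam ^ n) ≤ 2 * lam ^ (n+1) := by
      have hpow : 0 ≤ lam ^ n := le_of_lt (pow_pos lam_pos n)
      have : 2 * mu' ≤ lam := by
        unfold lam mu'; nlinarith [sqrt2_ge_one]
      calc lam ^ (n+1) + mu' * (2 * lam ^ n) = lam * lam ^ n + (2 * mu') * lam ^ n := by ring
        _ ≤ lam * lam ^ n + lam * lam ^ n := by nlinarith
        _ = 2 * lam ^ (n+1) := by ring
    linarith



lemma part1 : (PowerSeries.mk fun n => (CPerm.count XClass n : ℝ)) *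
    (1 - 4 * (PowerSeries.X : PowerSeries ℝ) + 2 * PowerSeries.X ^ 2) = 1 := by
  set F := PowerSeries.mk fun n => (CPerm.count XClass n : ℝ) with hF
  have expand : F * (1 - 4 * PowerSeries.X + 2 * PowerSeries.X ^ 2)
      = F - (4:ℝ) • (F * PowerSeries.X) + (2:ℝ) • (F * PowerSeries.X ^ 2) := by
    rw [PowerSeries.smul_eq_C_mul, PowerSeries.smul_eq_C_mul]
    have h4 : (PowerSeries.C (R := ℝ)) 4 = 4 := by simp [map_ofNat]
    have h2 : (PowerSeries.C (R := ℝ)) 2 = 2 := by simp [map_ofNat]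
    rw [h4, h2]; ring
  rw [expand]
  ext n
  have hcoeff : ∀ m, (PowerSeries.coeff (R := ℝ) m) F = cnt m := fun m => by
    rw [hF, PowerSeries.coeff_mk]; rfl
  rw [map_add, map_sub, map_smul, map_smul, PowerSeries.coeff_one]
  match n with
  | 0 =>
    rw [PowerSeries.coeff_zero_mul_X, PowerSeries.coeff_mul_X_pow']
    rw [hcoeff 0, cnt_zero]
    norm_num
  | 1 =>
    rw [PowerSeries.coeff_succ_mul_X, PowerSeries.coeff_mul_X_pow']
    rw [hcoeff, hcoeff, cnt_zero, cnt_one]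
    norm_num
  | (n+2) =>
    rw [PowerSeries.coeff_succ_mul_X, PowerSeries.coeff_mul_X_pow']
    rw [if_pos (by omega : (2:ℕ) ≤ n + 2), if_neg (by omega : ¬ (n + 2 = 0))]
    rw [hcoeff, hcoeff, hcoeff]
    rw [show n + 2 - 2 = n by omega]
    have := cnt_rec n
    simp only [smul_eq_mul]
    linarith

lemma part2 : Filter.Tendsto (fun n : ℕ => ((CPerm.count XClass n : ℝ)) ^ ((n : ℝ)⁻¹))
    Filter.atTop (nhds (2 + Real.sqrt 2)) := by
  have hgoal : Filter.Tendsto (fun n : ℕ => (cnt n) ^ ((n : ℝ)⁻¹)) Filter.atTop (nhds lam) := by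
    apply tendsto_of_tendsto_of_tendsto_of_le_of_le' (g := fun _ : ℕ => lam)
        (h := fun n : ℕ => (2:ℝ) ^ ((n:ℝ)⁻¹) * lam)
    · exact tendsto_const_nhds
    · have h1 : Filter.Tendsto (fun n : ℕ => ((n:ℝ))⁻¹) Filter.atTop (nhds 0) :=
        tendsto_inv_atTop_nhds_zero_nat
      have h2 : Filter.Tendsto (fun n : ℕ => (2:ℝ) ^ ((n:ℝ)⁻¹)) Filter.atTop (nhds 1) := by
        have hc := (Real.continuousAt_const_rpow (a := 2) (b := 0)
          (show (2:ℝ) ≠ 0 by norm_num)).tendsto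
        have h3 := hc.comp h1
        rw [Real.rpow_zero] at h3
        exact h3
      have h4 := h2.mul (tendsto_const_nhds (x := lam))
      rw [one_mul] at h4
      exact h4
    · filter_upwards [Filter.eventually_ge_atTop 1] with n hn
      have hne : (n:ℝ) ≠ 0 := Nat.cast_ne_zero.2 (by omega)
      have heq : lam = (lam ^ n : ℝ) ^ ((n:ℝ)⁻¹) := by
        rw [← Real.rpow_natCast lam n, ← Real.rpow_mul (le_of_lt lam_pos),
          mul_inv_cancel₀ hne, Real.rpow_one]
      rw [heq]
      exact Real.rpow_le_rpow (le_of_lt (pow_pos lam_pos n)) (cnt_low n) (by positivity)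
    · filter_upwards [Filter.eventually_ge_atTop 1] with n hn
      have hne : (n:ℝ) ≠ 0 := Nat.cast_ne_zero.2 (by omega)
      have h1 : (cnt n) ^ ((n:ℝ)⁻¹) ≤ (2 * lam ^ n : ℝ) ^ ((n:ℝ)⁻¹) :=
        Real.rpow_le_rpow (cnt_nonneg n) (cnt_up n) (by positivity)
      have h2 : (2 * lam ^ n : ℝ) ^ ((n:ℝ)⁻¹) = (2:ℝ) ^ ((n:ℝ)⁻¹) * lam := by
        rw [Real.mul_rpow (by norm_num) (le_of_lt (pow_pos lam_pos n))]
        congr 1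
        rw [← Real.rpow_natCast lam n, ← Real.rpow_mul (le_of_lt lam_pos),
          mul_inv_cancel₀ hne, Real.rpow_one]
      rw [← h2]
      exact h1
  exact hgoal


end XAux

/-- The centred X-class has generating function
`1/(1 − 4z + 2z²)` and growth rate `2 + √2`. -/
theorem XClass_genfun_and_growth :
    (PowerSeries.mk fun n => (CPerm.count XClass n : ℝ)) *
        (1 - 4 * (PowerSeries.X : PowerSeries ℝ) + 2 * PowerSeries.X ^ 2) = 1 ∧
    Tendsto (fun n : ℕ => ((CPerm.count XClass n : ℝ)) ^ ((n : ℝ)⁻¹)) atTop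
      (nhds (2 + Real.sqrt 2)) := by
  exact ⟨XAux.part1, XAux.part2⟩
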